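/- arXiv:2504.08178 — 10 statements merged into one kernel-verified Lean document; each statement's English description precedes it below -/
import Mathlib

section
/- For all real x ≥ 1 and k ∈ [1,2), exp(k·x^{2-k}/(2-k)) − (1 − k/2)·exp(k/(2−k)) ≥ (k/2)·exp(k/(2−k))·x². -/
/-! Write `a = 2 - k`. The tangent-line bound `y ^ a ≥ 1 + a log y` gives
`exp (k y ^ a / a) ≥ exp (k / a) * y ^ k`, and multiplying by `k y ^ (a - 1)` shows that the
derivative of `exp (k y ^ a / a)` dominates that of `(k / 2) exp (k / a) y ^ 2` for `y > 0`.
Hence their difference is monotone, and comparing its values at `1` and `x` is the claim. -/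

open Real Set

lemma one_add_mul_log_le_rpow {y : ℝ} (hy : 0 < y) (a : ℝ) : 1 + a * log y ≤ y ^ a := by
  rw [rpow_def_of_pos hy, mul_comm a]
  linarith [add_one_le_exp (log y * a)]

lemma exp_div_mul_rpow_le_exp_mul_rpow_div {a k y : ℝ} (ha : 0 < a) (hk : 0 ≤ k) (hy : 0 < y) :
    exp (k / a) * y ^ k ≤ exp (k * y ^ a / a) := by
  have hexponent : k / a + k * log y ≤ k * y ^ a / a := by
    rw [le_div_iff₀ ha]
    have := mul_le_mul_of_nonneg_left (one_add_mul_log_le_rpow hy a) hk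
    field_simp
    linarith
  calc exp (k / a) * y ^ k = exp (k / a + k * log y) := by
        rw [exp_add, rpow_def_of_pos hy, mul_comm (log y)]
    _ ≤ exp (k * y ^ a / a) := exp_le_exp.mpr hexponent

lemma hasDerivAt_exp_mul_rpow_div {a k y : ℝ} (ha : a ≠ 0) (hy : 0 < y) :
    HasDerivAt (fun z => exp (k * z ^ a / a)) (k * y ^ (a - 1) * exp (k * y ^ a / a)) y := by
  have hpow := ((hasDerivAt_rpow_const (p := a) (Or.inl hy.ne')).const_mul k).div_const a
  convert hpow.exp using 1
  field_simp

lemma monotoneOn_exp_mul_rpow_div_sub_mul_sq {a k : ℝ} (ha : 0 < a) (hk : 0 ≤ k)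
    (hak : a + k = 2) :
    MonotoneOn (fun y => exp (k * y ^ a / a) - k / 2 * exp (k / a) * y ^ 2) (Ioi 0) := by
  have hderiv : ∀ y ∈ Ioi (0 : ℝ), HasDerivAt
      (fun y => exp (k * y ^ a / a) - k / 2 * exp (k / a) * y ^ 2)
      (k * y ^ (a - 1) * exp (k * y ^ a / a) - k * exp (k / a) * y) y := by
    intro y hy
    refine ((hasDerivAt_exp_mul_rpow_div ha.ne' hy).sub
      ((hasDerivAt_pow 2 y).const_mul (k / 2 * exp (k / a)))).congr_deriv ?_
    norm_num
    ring
  refine monotoneOn_of_hasDerivWithinAt_nonneg (convex_Ioi 0)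
    (fun y hy => (hderiv y hy).continuousAt.continuousWithinAt)
    (fun y hy => (hderiv y (interior_subset hy)).hasDerivWithinAt) ?_
  intro y hy
  rw [interior_Ioi] at hy
  have hy : 0 < y := hy
  have hpow : y ^ (a - 1) * y ^ k = y := by
    rw [← rpow_add hy, show a - 1 + k = 1 by linarith, rpow_one]
  have hcomp := mul_le_mul_of_nonneg_left (exp_div_mul_rpow_le_exp_mul_rpow_div ha hk hy)
    (mul_nonneg hk (rpow_nonneg hy.le (a - 1)))
  calc (0 : ℝ) = k * exp (k / a) * (y ^ (a - 1) * y ^ k) - k * exp (k / a) * y := by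
        rw [hpow]; ring
    _ = k * y ^ (a - 1) * (exp (k / a) * y ^ k) - k * exp (k / a) * y := by ring
    _ ≤ k * y ^ (a - 1) * exp (k * y ^ a / a) - k * exp (k / a) * y := by linarith

theorem stmt_0 (k x : ℝ) (hk1 : 1 ≤ k) (hk2 : k < 2) (hx : 1 ≤ x) :
    (k / 2) * Real.exp (k / (2 - k)) * x ^ 2 ≤
      Real.exp (k * x ^ (2 - k) / (2 - k)) - (1 - k / 2) * Real.exp (k / (2 - k)) := by
  have hmono := monotoneOn_exp_mul_rpow_div_sub_mul_sq (a := 2 - k) (k := k)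
    (by linarith) (by linarith) (by ring)
  have h1x := hmono (show (0 : ℝ) < 1 from one_pos) (show 0 < x by linarith) hx
  simp only [one_rpow, mul_one, one_pow] at h1x
  linarith
end

section
/- Let k ∈ [1,2), Δ > 0, θ* ∈ ℝ^d, and define V_{k,0}(θ) = exp(k‖θ−θ*‖^{2−k}/((2−k)Δ^{2−k})) − (1 − k/2)·exp(k/(2−k)) if ‖θ−θ*‖ > Δ, and V_{k,0}(θ) = k·exp(k/(2−k))·‖θ−θ*‖²/(2Δ²) if ‖θ−θ*‖ ≤ Δ. Then V_{k,0}(θ) ≥ k·exp(k/(2−k))·‖θ−θ*‖²/(2Δ²) for all θ ∈ ℝ^d. -/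
/-!
Inside the ball both sides agree. Outside it, put `t = ‖θ - θ*‖ / Δ ≥ 1` and `a = k / (2 - k)`:
it suffices that `exp (a t^(2-k)) - exp a · (k/2) t²` is nondecreasing in `t`, since at `t = 1`
it equals `(1 - k/2) exp a`. Its derivative `k t^(1-k) exp (a t^(2-k)) - k t exp a` is
nonnegative because `exp a · t^k ≤ exp (a t^(2-k))`, which is `a` times the inequality
`(2-k) log t ≤ t^(2-k) - 1` exponentiated.
-/

open Real Set

lemma exp_mul_rpow_mul_le_exp_mul_rpow {a : ℝ} (ha : 0 ≤ a) (α : ℝ) {x : ℝ} (hx : 0 < x) :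
    exp a * x ^ (a * α) ≤ exp (a * x ^ α) := by
  have hlog : α * log x ≤ x ^ α - 1 := by
    rw [← log_rpow hx]
    exact log_le_sub_one_of_pos (rpow_pos_of_pos hx α)
  rw [rpow_def_of_pos hx, ← exp_add, exp_le_exp]
  linarith [mul_le_mul_of_nonneg_left hlog ha]

lemma monotoneOn_exp_rpow_sub_quadratic {k : ℝ} (hk0 : 0 ≤ k) (hk2 : k < 2) :
    MonotoneOn (fun t : ℝ => exp (k / (2 - k) * t ^ (2 - k)) - exp (k / (2 - k)) * (k / 2 * t ^ 2))
      (Ioi 0) := by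
  set a := k / (2 - k)
  have ha : 0 ≤ a := div_nonneg hk0 (by linarith)
  have haα : a * (2 - k) = k := div_mul_cancel₀ k (by linarith)
  have hderiv : ∀ t ∈ Ioi (0 : ℝ), HasDerivAt
      (fun t : ℝ => exp (a * t ^ (2 - k)) - exp a * (k / 2 * t ^ 2))
      (exp (a * t ^ (2 - k)) * (a * ((2 - k) * t ^ (2 - k - 1))) - exp a * (k / 2 * (2 * t))) t := by
    intro t ht
    have hrpow := (hasDerivAt_rpow_const (p := 2 - k) (Or.inl (ne_of_gt ht))).const_mul a
    have hsq := ((hasDerivAt_pow 2 t).const_mul (k / 2)).const_mul (exp a)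
    exact (hrpow.exp.sub hsq).congr_deriv (by norm_num)
  refine monotoneOn_of_hasDerivWithinAt_nonneg (convex_Ioi 0)
    (fun t ht => (hderiv t ht).continuousAt.continuousWithinAt)
    (fun t ht => (hderiv t (interior_subset ht)).hasDerivWithinAt) fun t ht => ?_
  rw [interior_Ioi] at ht
  have ht : 0 < t := ht
  have hpow : t ^ (2 - k - 1) * t ^ (a * (2 - k)) = t := by
    rw [← rpow_add ht, haα, show 2 - k - 1 + k = 1 by ring, rpow_one]
  have hcmp := mul_le_mul_of_nonneg_left (exp_mul_rpow_mul_le_exp_mul_rpow ha (2 - k) ht)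
    (mul_nonneg hk0 (rpow_pos_of_pos ht (2 - k - 1)).le)
  rw [sub_nonneg]
  calc exp a * (k / 2 * (2 * t)) = k * t ^ (2 - k - 1) * (exp a * t ^ (a * (2 - k))) := by
        linear_combination (-(k * exp a)) * hpow
    _ ≤ k * t ^ (2 - k - 1) * exp (a * t ^ (2 - k)) := hcmp
    _ = exp (a * t ^ (2 - k)) * (a * ((2 - k) * t ^ (2 - k - 1))) := by
        rw [← mul_assoc a, haα]; ring

lemma quadratic_le_exp_rpow_sub {k Δ r : ℝ} (hk0 : 0 ≤ k) (hk2 : k < 2) (hΔ : 0 < Δ)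
    (hr : Δ ≤ r) :
    k * exp (k / (2 - k)) * r ^ 2 / (2 * Δ ^ 2) ≤
      exp (k * r ^ (2 - k) / ((2 - k) * Δ ^ (2 - k))) - (1 - k / 2) * exp (k / (2 - k)) := by
  have hmono := monotoneOn_exp_rpow_sub_quadratic hk0 hk2 (mem_Ioi.2 one_pos)
    (mem_Ioi.2 (div_pos (hΔ.trans_le hr) hΔ)) ((one_le_div hΔ).2 hr)
  simp only [one_rpow, mul_one, one_pow, div_rpow (hΔ.le.trans hr) hΔ.le, div_pow] at hmono
  have hlhs : k * exp (k / (2 - k)) * r ^ 2 / (2 * Δ ^ 2) =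
      exp (k / (2 - k)) * (k / 2 * (r ^ 2 / Δ ^ 2)) := by ring
  have harg : k * r ^ (2 - k) / ((2 - k) * Δ ^ (2 - k)) =
      k / (2 - k) * (r ^ (2 - k) / Δ ^ (2 - k)) := by
    rw [div_mul_div_comm]
  rw [hlhs, harg]
  linarith

theorem stmt_2 (d : ℕ) (k Δ : ℝ) (hk1 : 1 ≤ k) (hk2 : k < 2) (hΔ : 0 < Δ)
    (θs θ : EuclideanSpace ℝ (Fin d)) :
    k * Real.exp (k / (2 - k)) * ‖θ - θs‖ ^ 2 / (2 * Δ ^ 2) ≤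
      (if Δ < ‖θ - θs‖ then
        Real.exp (k * ‖θ - θs‖ ^ (2 - k) / ((2 - k) * Δ ^ (2 - k)))
          - (1 - k / 2) * Real.exp (k / (2 - k))
      else k * Real.exp (k / (2 - k)) * ‖θ - θs‖ ^ 2 / (2 * Δ ^ 2)) := by
  split_ifs with hfar
  · exact quadratic_le_exp_rpow_sub (by linarith) hk2 hΔ hfar.le
  · exact le_rfl
end

section
/- Let f : ℝ^d → ℝ be differentiable with minimizer θ*, and suppose there exist constants a, b, Δ > 0 and k ∈ [1,2) such that ‖∇f(θ)‖ ≤ a‖θ−θ*‖^{k−1} and ⟨θ−θ*, ∇f(θ)⟩ ≥ b‖θ−θ*‖^k for all ‖θ−θ*‖ > Δ. Then for every θ with ‖θ−θ*‖ ≥ Δ and every stepsize 0 ≤ α ≤ min(2bΔ^{2−k}/a², 1/(2aΔ^{k−2})), we have (1/2)‖θ−θ*‖ ≤ ‖θ−θ* − α∇f(θ)‖ ≤ ‖θ−θ*‖. -/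
/-!
Outside the ball the two growth bounds give `‖g θ‖ ≤ a r ^ (k - 1)` and `⟪θ - θs, g θ⟫ ≥ b r ^ k`
with `r = ‖θ - θs‖`, and the stepsize bound makes `α ‖g θ‖ ≤ r / 2` and
`α ‖g θ‖ ^ 2 ≤ 2 ⟪θ - θs, g θ⟫`; the first gives the lower estimate by the triangle inequality, the
second the upper one by expanding `‖θ - θs - α g θ‖ ^ 2`.

On the sphere `r = Δ` itself nothing is assumed about `g`, which need not be continuous. There the
bounds are recovered from the fact that `g` is a gradient: along a ray leaving the ball, the
derivative of `f` at the start is a limit of difference quotients, which by the mean value theorem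
are values of the derivative at points where the bounds hold.
-/

open Real RealInnerProductSpace Filter Topology Set

theorem le_of_hasDerivAt_of_eventually_le {φ φ' : ℝ → ℝ} {x c : ℝ}
    (hφ : ∀ t, HasDerivAt φ (φ' t) t) (hle : ∀ᶠ t in 𝓝[>] x, φ' t ≤ c) : φ' x ≤ c := by
  obtain ⟨δ, hxδ, hδ⟩ := mem_nhdsGT_iff_exists_Ioo_subset.1 hle
  have hslope : ∀ᶠ t in 𝓝[>] x, slope φ x t ≤ c := by
    filter_upwards [Ioo_mem_nhdsGT hxδ] with T hT
    obtain ⟨s, hs, hs_eq⟩ := exists_hasDerivAt_eq_slope φ φ' hT.1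
      (fun t _ ↦ (hφ t).continuousAt.continuousWithinAt) (fun t _ ↦ hφ t)
    rw [slope_def_field, ← hs_eq]
    exact hδ ⟨hs.1, hs.2.trans hT.2⟩
  exact le_of_tendsto (hasDerivAt_iff_tendsto_slope_left_right.1 (hφ x)).2 hslope

theorem le_of_hasDerivAt_of_eventually_le_of_tendsto {φ φ' D : ℝ → ℝ} {x M : ℝ}
    (hφ : ∀ t, HasDerivAt φ (φ' t) t) (hle : ∀ᶠ t in 𝓝[>] x, φ' t ≤ D t)
    (hD : Tendsto D (𝓝[>] x) (𝓝 M)) : φ' x ≤ M :=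
  le_of_forall_gt_imp_ge_of_dense fun c hc ↦ le_of_hasDerivAt_of_eventually_le hφ <| by
    filter_upwards [hle, hD.eventually (gt_mem_nhds hc)] with t h₁ h₂ using h₁.trans h₂.le

theorem ge_of_hasDerivAt_of_eventually_ge_of_tendsto {φ φ' D : ℝ → ℝ} {x M : ℝ}
    (hφ : ∀ t, HasDerivAt φ (φ' t) t) (hge : ∀ᶠ t in 𝓝[>] x, D t ≤ φ' t)
    (hD : Tendsto D (𝓝[>] x) (𝓝 M)) : M ≤ φ' x := by
  have h := le_of_hasDerivAt_of_eventually_le_of_tendsto (φ' := fun t ↦ -φ' t)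
    (fun t ↦ (hφ t).neg) (hge.mono fun _ h ↦ neg_le_neg h) hD.neg
  exact neg_le_neg_iff.1 h

section Gradient

variable {E : Type*} [NormedAddCommGroup E] [InnerProductSpace ℝ E] [CompleteSpace E]
  {f : E → ℝ} {g : E → E}

theorem hasDerivAt_comp_add_smul_of_hasGradientAt (hgrad : ∀ y, HasGradientAt f (g y) y)
    (x v : E) (t : ℝ) : HasDerivAt (fun s : ℝ ↦ f (x + s • v)) ⟪g (x + t • v), v⟫ t :=
  (hgrad _).hasFDerivAt.comp_hasDerivAt t <| by
    simpa using (hasDerivAt_id t).smul_const v |>.const_add x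

variable {θs : E} {a b Δ : ℝ}

theorem mul_norm_rpow_le_inner_gradient (hgrad : ∀ y, HasGradientAt f (g y) y) {k : ℝ}
    (hΔ : 0 < Δ) (hlb : ∀ y, Δ < ‖y - θs‖ → b * ‖y - θs‖ ^ k ≤ ⟪y - θs, g y⟫)
    {x : E} (hx : Δ ≤ ‖x - θs‖) : b * ‖x - θs‖ ^ k ≤ ⟪x - θs, g x⟫ := by
  set u := x - θs
  have hu : 0 < ‖u‖ := hΔ.trans_le hx
  have hray : ∀ᶠ t : ℝ in 𝓝[>] (0 : ℝ),
      b * ((1 + t) * ‖u‖) ^ k / (1 + t) ≤ ⟪g (x + t • u), u⟫ := by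
    filter_upwards [self_mem_nhdsWithin] with t (ht : 0 < t)
    have hpt : x + t • u - θs = (1 + t) • u := by module
    have hnorm : ‖x + t • u - θs‖ = (1 + t) * ‖u‖ := by
      rw [hpt, norm_smul, Real.norm_of_nonneg (by linarith)]
    have h := hlb _ (by nlinarith)
    rw [hnorm, hpt, real_inner_smul_left, real_inner_comm] at h
    rwa [div_le_iff₀' (by linarith)]
  have hlim : Tendsto (fun t : ℝ ↦ b * ((1 + t) * ‖u‖) ^ k / (1 + t)) (𝓝[>] 0)
      (𝓝 (b * ‖u‖ ^ k)) := by
    have hcont : ContinuousAt (fun t : ℝ ↦ b * ((1 + t) * ‖u‖) ^ k / (1 + t)) 0 := by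
      fun_prop (disch := simp [hu.ne'])
    simpa using hcont.tendsto.mono_left nhdsWithin_le_nhds
  simpa [real_inner_comm] using ge_of_hasDerivAt_of_eventually_ge_of_tendsto
    (hasDerivAt_comp_add_smul_of_hasGradientAt hgrad x u) hray hlim

theorem norm_gradient_le_mul_norm_rpow (hgrad : ∀ y, HasGradientAt f (g y) y) {p : ℝ}
    (ha : 0 ≤ a) (hΔ : 0 < Δ) (hub : ∀ y, Δ < ‖y - θs‖ → ‖g y‖ ≤ a * ‖y - θs‖ ^ p)
    {x : E} (hx : Δ ≤ ‖x - θs‖) (hinner : 0 ≤ ⟪x - θs, g x⟫) :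
    ‖g x‖ ≤ a * ‖x - θs‖ ^ p := by
  set u := x - θs
  set v := g x
  have hu : u ≠ 0 := norm_pos_iff.1 (hΔ.trans_le hx)
  rcases eq_or_ne v 0 with hv | hv
  · rw [hv, norm_zero]
    positivity
  have hv' : 0 < ‖v‖ := norm_pos_iff.2 hv
  -- Moving along `g x` strictly increases the distance to `θs`, since `⟪u, v⟫ ≥ 0`.
  have hray : ∀ᶠ t : ℝ in 𝓝[>] (0 : ℝ), ⟪g (x + t • v), v⟫ ≤ a * ‖u + t • v‖ ^ p * ‖v‖ := by
    filter_upwards [self_mem_nhdsWithin] with t (ht : 0 < t)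
    have hpt : x + t • v - θs = u + t • v := by module
    have hsq : ‖u‖ ^ 2 < ‖u + t • v‖ ^ 2 := by
      rw [norm_add_sq_real, real_inner_smul_right, norm_smul, Real.norm_of_nonneg ht.le]
      nlinarith [mul_pos (mul_pos ht ht) (mul_pos hv' hv')]
    have hfar : Δ < ‖x + t • v - θs‖ := by
      rw [hpt]
      exact hx.trans_lt (pow_lt_pow_iff_left₀ (norm_nonneg _) (norm_nonneg _) two_ne_zero |>.1 hsq)
    calc ⟪g (x + t • v), v⟫ ≤ ‖g (x + t • v)‖ * ‖v‖ := real_inner_le_norm _ _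
      _ ≤ a * ‖u + t • v‖ ^ p * ‖v‖ := by
        rw [← hpt]
        exact mul_le_mul_of_nonneg_right (hub _ hfar) (norm_nonneg _)
  have hlim : Tendsto (fun t : ℝ ↦ a * ‖u + t • v‖ ^ p * ‖v‖) (𝓝[>] 0)
      (𝓝 (a * ‖u‖ ^ p * ‖v‖)) := by
    have hcont : ContinuousAt (fun t : ℝ ↦ a * ‖u + t • v‖ ^ p * ‖v‖) 0 := by
      fun_prop (disch := simp [hu])
    simpa using hcont.tendsto.mono_left nhdsWithin_le_nhds
  have h := le_of_hasDerivAt_of_eventually_le_of_tendsto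
    (hasDerivAt_comp_add_smul_of_hasGradientAt hgrad x v) hray hlim
  rw [zero_smul, add_zero, real_inner_self_eq_norm_mul_norm] at h
  exact le_of_mul_le_mul_right h hv'

end Gradient

theorem norm_sub_smul_le_norm {E : Type*} [NormedAddCommGroup E] [InnerProductSpace ℝ E]
    {u v : E} {α : ℝ} (hα : 0 ≤ α) (h : α * ‖v‖ ^ 2 ≤ 2 * ⟪u, v⟫) : ‖u - α • v‖ ≤ ‖u‖ := by
  rw [← sq_le_sq₀ (norm_nonneg _) (norm_nonneg _), norm_sub_sq_real, real_inner_smul_right,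
    norm_smul, Real.norm_of_nonneg hα]
  nlinarith [mul_le_mul_of_nonneg_left h hα]

section Stepsize

variable {a b Δ k r α : ℝ}

theorem mul_mul_rpow_sub_one_le_half (ha : 0 < a) (hΔ : 0 < Δ) (hk : k < 2) (hr : Δ ≤ r)
    (hα0 : 0 ≤ α) (hα : α ≤ 1 / (2 * a * Δ ^ (k - 2))) : α * (a * r ^ (k - 1)) ≤ r / 2 := by
  have hr0 : 0 < r := hΔ.trans_le hr
  have hαΔ : α * (2 * a * Δ ^ (k - 2)) ≤ 1 := (le_div_iff₀ (by positivity)).1 hα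
  have hrΔ : r ^ (k - 2) ≤ Δ ^ (k - 2) := rpow_le_rpow_of_nonpos hΔ hr (by linarith)
  have hpow : r ^ (k - 1) = r ^ (k - 2) * r := by
    rw [← rpow_add_one hr0.ne']
    ring_nf
  have hαr : α * (2 * a * r ^ (k - 2)) ≤ 1 :=
    (mul_le_mul_of_nonneg_left (by gcongr) hα0).trans hαΔ
  rw [hpow]
  nlinarith [mul_le_mul_of_nonneg_right hαr hr0.le]

theorem mul_sq_mul_rpow_sub_one_le (hb : 0 ≤ b) (hΔ : 0 < Δ) (hk : k < 2) (hr : Δ ≤ r)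
    (hα : α ≤ 2 * b * Δ ^ (2 - k) / a ^ 2) :
    α * (a * r ^ (k - 1)) ^ 2 ≤ 2 * (b * r ^ k) := by
  have hr0 : 0 < r := hΔ.trans_le hr
  have hαa : α * a ^ 2 ≤ 2 * b * r ^ (2 - k) := by
    rcases eq_or_ne a 0 with rfl | ha
    · rw [zero_pow two_ne_zero, mul_zero]
      positivity
    calc α * a ^ 2 ≤ 2 * b * Δ ^ (2 - k) := (le_div_iff₀ (by positivity)).1 hα
      _ ≤ 2 * b * r ^ (2 - k) := by gcongr
  have hpow : r ^ (2 - k) * (r ^ (k - 1)) ^ 2 = r ^ k := by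
    rw [sq, ← rpow_add hr0, ← rpow_add hr0]
    ring_nf
  calc α * (a * r ^ (k - 1)) ^ 2 = α * a ^ 2 * (r ^ (k - 1)) ^ 2 := by ring
    _ ≤ 2 * b * r ^ (2 - k) * (r ^ (k - 1)) ^ 2 := by gcongr
    _ = 2 * (b * r ^ k) := by rw [mul_assoc, hpow, mul_assoc]

end Stepsize

theorem stmt_4_general (d : ℕ) (f : EuclideanSpace ℝ (Fin d) → ℝ)
    (g : EuclideanSpace ℝ (Fin d) → EuclideanSpace ℝ (Fin d))
    (θs : EuclideanSpace ℝ (Fin d)) (a b Δ k : ℝ)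
    (hgrad : ∀ θ, HasGradientAt f (g θ) θ)
    (ha : 0 < a) (hb : 0 < b) (hΔ : 0 < Δ) (hk2 : k < 2)
    (hub : ∀ θ, Δ < ‖θ - θs‖ → ‖g θ‖ ≤ a * ‖θ - θs‖ ^ (k - 1))
    (hlb : ∀ θ, Δ < ‖θ - θs‖ → b * ‖θ - θs‖ ^ k ≤ ⟪θ - θs, g θ⟫)
    (θ : EuclideanSpace ℝ (Fin d)) (hθ : Δ ≤ ‖θ - θs‖)
    (α : ℝ) (hα0 : 0 ≤ α)
    (hα : α ≤ min (2 * b * Δ ^ (2 - k) / a ^ 2) (1 / (2 * a * Δ ^ (k - 2)))) :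
    (1 / 2) * ‖θ - θs‖ ≤ ‖θ - θs - α • g θ‖ ∧ ‖θ - θs - α • g θ‖ ≤ ‖θ - θs‖ := by
  have hinner := mul_norm_rpow_le_inner_gradient hgrad hΔ hlb hθ
  have hnorm := norm_gradient_le_mul_norm_rpow hgrad ha.le hΔ hub hθ
    (le_trans (by positivity) hinner)
  have hstep : α * ‖g θ‖ ≤ ‖θ - θs‖ / 2 :=
    (mul_le_mul_of_nonneg_left hnorm hα0).trans
      (mul_mul_rpow_sub_one_le_half ha hΔ hk2 hθ hα0 (hα.trans (min_le_right _ _)))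
  have hstep_sq : α * ‖g θ‖ ^ 2 ≤ 2 * ⟪θ - θs, g θ⟫ :=
    calc α * ‖g θ‖ ^ 2 ≤ α * (a * ‖θ - θs‖ ^ (k - 1)) ^ 2 := by gcongr
      _ ≤ 2 * (b * ‖θ - θs‖ ^ k) :=
        mul_sq_mul_rpow_sub_one_le hb.le hΔ hk2 hθ (hα.trans (min_le_left _ _))
      _ ≤ 2 * ⟪θ - θs, g θ⟫ := by linarith
  refine ⟨?_, norm_sub_smul_le_norm hα0 hstep_sq⟩
  have := norm_sub_norm_le (θ - θs) (α • g θ)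
  rw [norm_smul, Real.norm_of_nonneg hα0] at this
  linarith

theorem stmt_4 (d : ℕ) (f : EuclideanSpace ℝ (Fin d) → ℝ)
    (g : EuclideanSpace ℝ (Fin d) → EuclideanSpace ℝ (Fin d))
    (θs : EuclideanSpace ℝ (Fin d)) (a b Δ k : ℝ)
    (hgrad : ∀ θ, HasGradientAt f (g θ) θ)
    (hmin : ∀ θ, f θs ≤ f θ)
    (ha : 0 < a) (hb : 0 < b) (hΔ : 0 < Δ) (hk1 : 1 ≤ k) (hk2 : k < 2)
    (hub : ∀ θ, Δ < ‖θ - θs‖ → ‖g θ‖ ≤ a * ‖θ - θs‖ ^ (k - 1))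
    (hlb : ∀ θ, Δ < ‖θ - θs‖ → b * ‖θ - θs‖ ^ k ≤ ⟪θ - θs, g θ⟫)
    (θ : EuclideanSpace ℝ (Fin d)) (hθ : Δ ≤ ‖θ - θs‖)
    (α : ℝ) (hα0 : 0 ≤ α)
    (hα : α ≤ min (2 * b * Δ ^ (2 - k) / a ^ 2) (1 / (2 * a * Δ ^ (k - 2)))) :
    (1 / 2) * ‖θ - θs‖ ≤ ‖θ - θs - α • g θ‖ ∧ ‖θ - θs - α • g θ‖ ≤ ‖θ - θs‖ :=
  stmt_4_general d f g θs a b Δ k hgrad ha hb hΔ hk2 hub hlb θ hθ α hα0 hα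
end

section
/- Let x be a random vector in ℝ^d with E[x xᵀ] = I_d, and suppose ‖x‖ is σ_x-sub-exponential in the sense that P(‖x‖ > t) ≤ 2exp(−t/σ_x) for all t ≥ 0, with E[‖x‖⁴] < ∞. Then, setting Δ_x = σ_x · ln(8·E[‖x‖⁴]), for every u ∈ ℝ^d: uᵀ E[x xᵀ · 1{‖x‖ ≤ Δ_x}] u ≥ (1/2)‖u‖². -/
/-!
Isotropy gives `E⟪x, u⟫² = ‖u‖²`, so it suffices to show that the part cut off by the
truncation, `E[⟪x, u⟫² 1{‖x‖ > Δ}] ≤ ‖u‖² E[‖x‖² 1{‖x‖ > Δ}]`, is at most `‖u‖² / 2`.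
By Cauchy–Schwarz, `E[‖x‖² 1{‖x‖ > Δ}] ≤ √(E‖x‖⁴) √P(‖x‖ > Δ)`, and the sub-exponential tail at
`Δ = σ log (8 E‖x‖⁴)` gives `P(‖x‖ > Δ) ≤ 1 / (4 E‖x‖⁴)`, so the product is `1 / 2`.
Using the tail bound requires `Δ ≥ 0`, i.e. `E‖x‖⁴ ≥ 1`; this is Cauchy–Schwarz again:
`1 = E⟪x, e⟫² ≤ E‖x‖² ≤ √(E‖x‖⁴)` for a unit vector `e`.
-/

open Real MeasureTheory RealInnerProductSpace

theorem integral_le_sqrt_integral_sq_mul_sqrt_measureReal {α : Type*} [MeasurableSpace α]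
    {μ : Measure α} [IsFiniteMeasure μ] {f : α → ℝ} (hf : MemLp f 2 μ) :
    ∫ a, f a ∂μ ≤ √(∫ a, f a ^ 2 ∂μ) * √(μ.real Set.univ) := by
  have h := integral_mul_le_Lp_mul_Lq_of_nonneg Real.HolderConjugate.two_two
    (ae_of_all _ fun a => abs_nonneg (f a)) (ae_of_all _ fun _ => zero_le_one)
    (by rw [ENNReal.ofReal_ofNat]; exact hf.abs) (memLp_const (1 : ℝ))
  simp only [mul_one, one_pow, integral_const, smul_eq_mul, rpow_two, sq_abs,
    ← sqrt_eq_rpow] at h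
  exact (integral_mono (hf.integrable one_le_two) (hf.integrable one_le_two).abs
    fun a => le_abs_self (f a)).trans h

theorem measureReal_lt_le_of_tail_le_two_mul_exp {Ω : Type*} [MeasurableSpace Ω] {μ : Measure Ω}
    {X : Ω → ℝ} {σ a : ℝ} (hσ : 0 < σ) (ha : 1 ≤ a)
    (htail : ∀ t : ℝ, 0 ≤ t → μ {ω | t < X ω} ≤ ENNReal.ofReal (2 * exp (-t / σ))) :
    μ.real {ω | σ * log a < X ω} ≤ 2 / a := by
  have h := htail _ (mul_nonneg hσ.le (log_nonneg ha))
  rw [neg_div, mul_div_cancel_left₀ _ hσ.ne', exp_neg, exp_log (by linarith), ← div_eq_mul_inv] at h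
  exact ENNReal.toReal_le_of_le_ofReal (by positivity) h

theorem real_inner_sq_le_norm_sq_mul_norm_sq {E : Type*} [NormedAddCommGroup E]
    [InnerProductSpace ℝ E] (a b : E) : ⟪a, b⟫ ^ 2 ≤ ‖a‖ ^ 2 * ‖b‖ ^ 2 := by
  rw [← mul_pow, ← sq_abs]
  exact pow_le_pow_left₀ (abs_nonneg _) (abs_real_inner_le_norm a b) 2

section Moments

variable {Ω F : Type*} [MeasurableSpace Ω] {μ : Measure Ω} [NormedAddCommGroup F] {f : Ω → F}

theorem memLp_two_of_integrable_norm_pow_four [IsFiniteMeasure μ] (hf : AEStronglyMeasurable f μ)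
    (h4 : Integrable (fun ω => ‖f ω‖ ^ 4) μ) : MemLp f 2 μ :=
  (memLp_two_iff_integrable_sq_norm hf).2 (integrable_norm_pow_of_le hf (by norm_num) h4)

theorem memLp_two_norm_sq_of_integrable_norm_pow_four (hf : AEStronglyMeasurable f μ)
    (h4 : Integrable (fun ω => ‖f ω‖ ^ 4) μ) : MemLp (fun ω => ‖f ω‖ ^ 2) 2 μ :=
  (memLp_two_iff_integrable_sq (by fun_prop)).2 (h4.congr (.of_forall fun ω => by ring))

theorem setIntegral_norm_sq_le_sqrt_mul_sqrt [IsFiniteMeasure μ] (hf : AEStronglyMeasurable f μ)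
    (h4 : Integrable (fun ω => ‖f ω‖ ^ 4) μ) (s : Set Ω) :
    ∫ ω in s, ‖f ω‖ ^ 2 ∂μ ≤ √(∫ ω, ‖f ω‖ ^ 4 ∂μ) * √(μ.real s) := by
  have hfourth : ∫ ω in s, (‖f ω‖ ^ 2) ^ 2 ∂μ ≤ ∫ ω, ‖f ω‖ ^ 4 ∂μ := by
    simp only [← pow_mul]
    exact setIntegral_le_integral h4 (.of_forall fun _ => by positivity)
  calc ∫ ω in s, ‖f ω‖ ^ 2 ∂μ
      ≤ √(∫ ω in s, (‖f ω‖ ^ 2) ^ 2 ∂μ) * √((μ.restrict s).real Set.univ) :=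
        integral_le_sqrt_integral_sq_mul_sqrt_measureReal
          (MemLp.restrict s (memLp_two_norm_sq_of_integrable_norm_pow_four hf h4))
    _ ≤ √(∫ ω, ‖f ω‖ ^ 4 ∂μ) * √(μ.real s) := by
        rw [measureReal_restrict_apply_univ]
        exact mul_le_mul_of_nonneg_right (sqrt_le_sqrt hfourth) (sqrt_nonneg _)

theorem setIntegral_norm_sq_le_half_of_tail_le_two_mul_exp [IsFiniteMeasure μ]
    (hf : AEStronglyMeasurable f μ) (h4 : Integrable (fun ω => ‖f ω‖ ^ 4) μ)
    (h8 : 1 ≤ 8 * ∫ ω, ‖f ω‖ ^ 4 ∂μ) {σ : ℝ} (hσ : 0 < σ)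
    (htail : ∀ t : ℝ, 0 ≤ t → μ {ω | t < ‖f ω‖} ≤ ENNReal.ofReal (2 * exp (-t / σ))) :
    ∫ ω in {ω | σ * log (8 * ∫ ω', ‖f ω'‖ ^ 4 ∂μ) < ‖f ω‖}, ‖f ω‖ ^ 2 ∂μ ≤ 1 / 2 := by
  set M := ∫ ω, ‖f ω‖ ^ 4 ∂μ
  have hprob := measureReal_lt_le_of_tail_le_two_mul_exp hσ h8 htail
  have hM : 0 < M := by linarith
  calc _ ≤ √M * √(μ.real {ω | σ * log (8 * M) < ‖f ω‖}) :=
        setIntegral_norm_sq_le_sqrt_mul_sqrt hf h4 _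
    _ ≤ √M * √(2 / (8 * M)) := mul_le_mul_of_nonneg_left (sqrt_le_sqrt hprob) (sqrt_nonneg M)
    _ = 1 / 2 := by
        rw [← sqrt_mul hM.le, show M * (2 / (8 * M)) = (1 / 2) ^ 2 by field_simp; ring,
          sqrt_sq (by norm_num)]

end Moments

section Isotropic

variable {Ω E : Type*} [MeasurableSpace Ω] {μ : Measure Ω} [NormedAddCommGroup E]
  [InnerProductSpace ℝ E] {x : Ω → E}

theorem integrable_inner_sq (hx : MemLp x 2 μ) (u : E) :
    Integrable (fun ω => ⟪x ω, u⟫ ^ 2) μ :=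
  (memLp_two_iff_integrable_sq (hx.inner_const u).aestronglyMeasurable).1 (hx.inner_const u)

theorem one_le_integral_norm_pow_four [IsProbabilityMeasure μ] (hx : AEStronglyMeasurable x μ)
    (h4 : Integrable (fun ω => ‖x ω‖ ^ 4) μ)
    (hiso : ∀ u, ∫ ω, ⟪x ω, u⟫ ^ 2 ∂μ = ‖u‖ ^ 2) {e : E} (he : ‖e‖ = 1) :
    1 ≤ ∫ ω, ‖x ω‖ ^ 4 ∂μ := by
  have hx2 := memLp_two_of_integrable_norm_pow_four hx h4
  have hsecond : 1 ≤ ∫ ω, ‖x ω‖ ^ 2 ∂μ :=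
    calc 1 = ∫ ω, ⟪x ω, e⟫ ^ 2 ∂μ := by rw [hiso, he, one_pow]
      _ ≤ ∫ ω, ‖x ω‖ ^ 2 ∂μ :=
        integral_mono (integrable_inner_sq hx2 e) ((memLp_two_iff_integrable_sq_norm hx).1 hx2)
          fun ω => by simpa [he] using real_inner_sq_le_norm_sq_mul_norm_sq (x ω) e
  have := setIntegral_norm_sq_le_sqrt_mul_sqrt hx h4 Set.univ
  rw [setIntegral_univ, probReal_univ, sqrt_one, mul_one] at this
  exact one_le_sqrt.1 (hsecond.trans this)

theorem sub_mul_setIntegral_compl_norm_sq_le_setIntegral_inner_sq (hx : MemLp x 2 μ)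
    (hiso : ∀ u, ∫ ω, ⟪x ω, u⟫ ^ 2 ∂μ = ‖u‖ ^ 2) (u : E) {s : Set Ω} (hs : MeasurableSet s) :
    ‖u‖ ^ 2 - ‖u‖ ^ 2 * ∫ ω in sᶜ, ‖x ω‖ ^ 2 ∂μ ≤ ∫ ω in s, ⟪x ω, u⟫ ^ 2 ∂μ := by
  have hsplit := integral_add_compl hs (integrable_inner_sq hx u)
  have hcompl : ∫ ω in sᶜ, ⟪x ω, u⟫ ^ 2 ∂μ ≤ ‖u‖ ^ 2 * ∫ ω in sᶜ, ‖x ω‖ ^ 2 ∂μ := by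
    rw [← integral_const_mul]
    refine setIntegral_mono (integrable_inner_sq hx u).integrableOn
      (((memLp_two_iff_integrable_sq_norm hx.1).1 hx).const_mul _).integrableOn fun ω => ?_
    simpa only [mul_comm] using real_inner_sq_le_norm_sq_mul_norm_sq (x ω) u
  linarith [hiso u]

end Isotropic

theorem stmt_6 {Ω : Type*} [MeasurableSpace Ω] (μ : Measure Ω) [IsProbabilityMeasure μ]
    (d : ℕ) (x : Ω → EuclideanSpace ℝ (Fin d)) (σx : ℝ) (hσ : 0 < σx)
    (hmeas : Measurable x)
    (hiso : ∀ u v : EuclideanSpace ℝ (Fin d), ∫ ω, ⟪x ω, u⟫ * ⟪x ω, v⟫ ∂μ = ⟪u, v⟫)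
    (htail : ∀ t : ℝ, 0 ≤ t → μ {ω | t < ‖x ω‖} ≤ ENNReal.ofReal (2 * Real.exp (-t / σx)))
    (hint : Integrable (fun ω => ‖x ω‖ ^ 4) μ)
    (u : EuclideanSpace ℝ (Fin d)) :
    (1 / 2) * ‖u‖ ^ 2 ≤
      ∫ ω, (if ‖x ω‖ ≤ σx * Real.log (8 * ∫ ω', ‖x ω'‖ ^ 4 ∂μ) then ⟪x ω, u⟫ ^ 2 else 0) ∂μ := by
  set M := ∫ ω', ‖x ω'‖ ^ 4 ∂μ
  set S := {ω | ‖x ω‖ ≤ σx * log (8 * M)}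
  have hx : AEStronglyMeasurable x μ := hmeas.aestronglyMeasurable
  have hiso_sq (v : EuclideanSpace ℝ (Fin d)) : ∫ ω, ⟪x ω, v⟫ ^ 2 ∂μ = ‖v‖ ^ 2 := by
    simpa only [sq, real_inner_self_eq_norm_mul_norm] using hiso v v
  have hS : MeasurableSet S := measurableSet_le hmeas.norm measurable_const
  have hSc : Sᶜ = {ω | σx * log (8 * M) < ‖x ω‖} := by ext; simp [S]
  have htrunc := sub_mul_setIntegral_compl_norm_sq_le_setIntegral_inner_sq
    (memLp_two_of_integrable_norm_pow_four hx hint) hiso_sq u hS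
  have htail_moment : ‖u‖ ^ 2 * ∫ ω in Sᶜ, ‖x ω‖ ^ 2 ∂μ ≤ ‖u‖ ^ 2 * (1 / 2) := by
    rcases eq_or_ne u 0 with rfl | hu
    · simp
    have hM : 1 ≤ M :=
      one_le_integral_norm_pow_four hx hint hiso_sq (norm_smul_inv_norm (𝕜 := ℝ) hu)
    rw [hSc]
    gcongr
    exact setIntegral_norm_sq_le_half_of_tail_le_two_mul_exp hx hint (by linarith) hσ htail
  rw [← integral_indicator hS] at htrunc
  have hind : (S.indicator fun ω => ⟪x ω, u⟫ ^ 2) =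
      fun ω => if ‖x ω‖ ≤ σx * log (8 * M) then ⟪x ω, u⟫ ^ 2 else 0 := by
    ext ω; simp [S, Set.indicator_apply]
  rw [hind] at htrunc
  linarith
end

section
/- Let x be a random vector in ℝ^d with E[x xᵀ] = I_d and E[‖x‖⁴] < ∞. Then for every a ≥ 0 and every nonzero θ ∈ ℝ^d: E[|xᵀθ| · 1{|xᵀθ| ≥ a}] ≥ (9/(32·E[‖x‖⁴]))·‖θ‖ − a. -/
/-! For `Z = ⟪x, θ⟫` and `t = ‖θ‖`, isotropy gives `E Z² = t²` and Cauchy–Schwarz gives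
`E Z⁴ ≤ K t⁴` with `K = E ‖x‖⁴`; Jensen (`(E Z²)² ≤ E Z⁴`) then forces `K ≥ 1`.
Integrating the pointwise split `z² ≤ s|z| + z⁴/s²` (according as `|z| ≤ s` or not) at level
`s = 2Kt` yields `t² ≤ 2Kt E|Z| + t²/4`, i.e. `E|Z| ≥ 3t/(8K) ≥ 9t/(32K)`.
Discarding the values `|Z| < a` costs at most `a`. -/

open Real MeasureTheory RealInnerProductSpace

section Moments

variable {Ω : Type*} [MeasurableSpace Ω] {μ : Measure Ω}

lemma memLp_of_integrable_norm_pow {E : Type*} [NormedAddCommGroup E] {x : Ω → E}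
    (hx : AEStronglyMeasurable x μ) {p : ℕ} (hp : p ≠ 0)
    (hint : Integrable (fun ω => ‖x ω‖ ^ p) μ) : MemLp x p μ :=
  (integrable_norm_rpow_iff hx (by simpa using hp) (by simp)).1 (by simpa using hint)

lemma MeasureTheory.MemLp.integrable_pow_four {Z : Ω → ℝ} (hZ : MemLp Z 4 μ) :
    Integrable (fun ω => Z ω ^ 4) μ := by
  simpa [Real.norm_eq_abs, Even.pow_abs (by decide : Even 4)] using
    hZ.integrable_norm_pow (by norm_num)

lemma sq_integral_le_integral_sq [IsProbabilityMeasure μ] {X : Ω → ℝ} (hX : MemLp X 2 μ) :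
    (∫ ω, X ω ∂μ) ^ 2 ≤ ∫ ω, X ω ^ 2 ∂μ := by
  have h := ProbabilityTheory.variance_nonneg X μ
  rw [ProbabilityTheory.variance_eq_sub hX] at h
  simpa using h

lemma sq_integral_sq_le_integral_pow_four [IsProbabilityMeasure μ] {Z : Ω → ℝ}
    (hZ : MemLp Z 4 μ) : (∫ ω, Z ω ^ 2 ∂μ) ^ 2 ≤ ∫ ω, Z ω ^ 4 ∂μ := by
  have hZ2 : MemLp (fun ω => Z ω ^ 2) 2 μ :=
    (memLp_two_iff_integrable_sq (hZ.1.pow 2)).2 (by simpa [← pow_mul] using hZ.integrable_pow_four)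
  simpa [← pow_mul] using sq_integral_le_integral_sq hZ2

lemma sq_le_mul_abs_add_pow_four_div {s : ℝ} (hs : 0 < s) (z : ℝ) :
    z ^ 2 ≤ s * |z| + z ^ 4 / s ^ 2 := by
  rcases le_total |z| s with h | h
  · have hsmall : z ^ 2 ≤ s * |z| := by
      rw [← sq_abs, sq]
      exact mul_le_mul_of_nonneg_right h (abs_nonneg z)
    linarith [show 0 ≤ z ^ 4 / s ^ 2 by positivity]
  · have hlarge : z ^ 2 ≤ z ^ 4 / s ^ 2 := by
      have hsz : s ^ 2 ≤ z ^ 2 := by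
        rw [← sq_abs z]
        exact pow_le_pow_left₀ hs.le h 2
      rw [le_div_iff₀ (by positivity)]
      nlinarith [mul_le_mul_of_nonneg_left hsz (sq_nonneg z)]
    linarith [show 0 ≤ s * |z| by positivity]

lemma integral_sq_le_mul_integral_abs_add_integral_pow_four_div [IsFiniteMeasure μ]
    {Z : Ω → ℝ} (hZ : MemLp Z 4 μ) {s : ℝ} (hs : 0 < s) :
    ∫ ω, Z ω ^ 2 ∂μ ≤ s * ∫ ω, |Z ω| ∂μ + (∫ ω, Z ω ^ 4 ∂μ) / s ^ 2 := by
  have hZ1 : Integrable (fun ω => |Z ω|) μ := (hZ.integrable (by norm_num)).abs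
  have hZ2 : Integrable (fun ω => Z ω ^ 2) μ := (hZ.mono_exponent (by norm_num)).integrable_sq
  have hZ4 : Integrable (fun ω => Z ω ^ 4 / s ^ 2) μ := hZ.integrable_pow_four.div_const _
  calc ∫ ω, Z ω ^ 2 ∂μ ≤ ∫ ω, (s * |Z ω| + Z ω ^ 4 / s ^ 2) ∂μ :=
        integral_mono hZ2 ((hZ1.const_mul s).add hZ4)
          fun ω => sq_le_mul_abs_add_pow_four_div hs (Z ω)
    _ = s * ∫ ω, |Z ω| ∂μ + (∫ ω, Z ω ^ 4 ∂μ) / s ^ 2 := by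
        rw [integral_add (hZ1.const_mul s) hZ4, integral_const_mul, integral_div]

lemma three_mul_le_eight_mul_integral_abs [IsProbabilityMeasure μ] {Z : Ω → ℝ}
    (hZ : MemLp Z 4 μ) {t K : ℝ} (ht : 0 < t) (h2 : ∫ ω, Z ω ^ 2 ∂μ = t ^ 2)
    (h4 : ∫ ω, Z ω ^ 4 ∂μ ≤ K * t ^ 4) :
    3 * t ≤ 8 * K * ∫ ω, |Z ω| ∂μ := by
  have hK : 1 ≤ K := by
    have hjensen := sq_integral_sq_le_integral_pow_four hZ
    rw [h2] at hjensen
    nlinarith [pow_pos ht 4]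
  have hsplit := integral_sq_le_mul_integral_abs_add_integral_pow_four_div hZ
    (show 0 < 2 * K * t by positivity)
  have hrem : (∫ ω, Z ω ^ 4 ∂μ) / (2 * K * t) ^ 2 ≤ t ^ 2 / 4 := by
    rw [div_le_div_iff₀ (by positivity) (by norm_num)]
    have hK2 : K * t ^ 4 ≤ K ^ 2 * t ^ 4 := by
      gcongr
      nlinarith
    nlinarith
  rw [h2] at hsplit
  nlinarith

lemma integral_abs_sub_le_integral_ite [IsProbabilityMeasure μ] {Z : Ω → ℝ}
    (hZ : Integrable Z μ) {a : ℝ} (ha : 0 ≤ a) :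
    ∫ ω, |Z ω| ∂μ - a ≤ ∫ ω, (if a ≤ |Z ω| then |Z ω| else 0) ∂μ := by
  have hcut : Measurable fun y : ℝ => if a ≤ y then y else 0 :=
    Measurable.ite measurableSet_Ici measurable_id measurable_const
  have hint : Integrable (fun ω => if a ≤ |Z ω| then |Z ω| else 0) μ := by
    refine hZ.abs.mono' (hcut.comp_aemeasurable hZ.aemeasurable.abs).aestronglyMeasurable
      (Filter.Eventually.of_forall fun ω => ?_)
    split_ifs <;> simp
  calc ∫ ω, |Z ω| ∂μ - a = ∫ ω, (|Z ω| - a) ∂μ := by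
        rw [integral_sub hZ.abs (integrable_const a), integral_const, probReal_univ, one_smul]
    _ ≤ _ := integral_mono (hZ.abs.sub (integrable_const a)) hint fun ω => by
        dsimp only
        split_ifs <;> linarith [abs_nonneg (Z ω)]

end Moments

lemma integral_inner_pow_four_le {Ω E : Type*} [MeasurableSpace Ω] {μ : Measure Ω}
    [NormedAddCommGroup E] [InnerProductSpace ℝ E] {x : Ω → E} (hx : MemLp x 4 μ) (θ : E) :
    ∫ ω, ⟪x ω, θ⟫ ^ 4 ∂μ ≤ (∫ ω, ‖x ω‖ ^ 4 ∂μ) * ‖θ‖ ^ 4 := by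
  rw [← integral_mul_const]
  refine integral_mono (hx.inner_const θ).integrable_pow_four
    ((hx.integrable_norm_pow (by norm_num)).mul_const _) fun ω => ?_
  calc ⟪x ω, θ⟫ ^ 4 = |⟪x ω, θ⟫| ^ 4 := (Even.pow_abs (by decide) _).symm
    _ ≤ (‖x ω‖ * ‖θ‖) ^ 4 := pow_le_pow_left₀ (abs_nonneg _) (abs_real_inner_le_norm _ _) 4
    _ = ‖x ω‖ ^ 4 * ‖θ‖ ^ 4 := mul_pow _ _ _

theorem stmt_7 {Ω : Type*} [MeasurableSpace Ω] (μ : Measure Ω) [IsProbabilityMeasure μ]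
    (d : ℕ) (x : Ω → EuclideanSpace ℝ (Fin d))
    (hmeas : Measurable x)
    (hiso : ∀ u v : EuclideanSpace ℝ (Fin d), ∫ ω, ⟪x ω, u⟫ * ⟪x ω, v⟫ ∂μ = ⟪u, v⟫)
    (hint : Integrable (fun ω => ‖x ω‖ ^ 4) μ)
    (a : ℝ) (ha : 0 ≤ a) (θ : EuclideanSpace ℝ (Fin d)) (hθ : θ ≠ 0) :
    9 / (32 * ∫ ω, ‖x ω‖ ^ 4 ∂μ) * ‖θ‖ - a ≤
      ∫ ω, (if a ≤ |⟪x ω, θ⟫| then |⟪x ω, θ⟫| else 0) ∂μ := by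
  set K := ∫ ω, ‖x ω‖ ^ 4 ∂μ
  have hx : MemLp x 4 μ :=
    memLp_of_integrable_norm_pow hmeas.aestronglyMeasurable (by norm_num) hint
  have hZ : MemLp (fun ω => ⟪x ω, θ⟫) 4 μ := hx.inner_const θ
  have h2 : ∫ ω, ⟪x ω, θ⟫ ^ 2 ∂μ = ‖θ‖ ^ 2 := by
    simpa [sq, real_inner_self_eq_norm_sq] using hiso θ θ
  have h4 : ∫ ω, ⟪x ω, θ⟫ ^ 4 ∂μ ≤ K * ‖θ‖ ^ 4 := integral_inner_pow_four_le hx θ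
  have hI1 := three_mul_le_eight_mul_integral_abs hZ (norm_pos_iff.2 hθ) h2 h4
  have hK : 0 ≤ K := integral_nonneg fun ω => by positivity
  have hmain : 9 / (32 * K) * ‖θ‖ ≤ ∫ ω, |⟪x ω, θ⟫| ∂μ := by
    rw [div_mul_eq_mul_div]
    exact div_le_of_le_mul₀ (by linarith) (integral_nonneg fun ω => abs_nonneg _)
      (by nlinarith [norm_nonneg θ])
  linarith [integral_abs_sub_le_integral_ite (hZ.integrable (by norm_num)) ha]
end

section
/- Let X be a real random variable and q ∈ (0,1]. If there exists K > 0 with P(|X| ≥ t) ≤ 2·exp(−t^q/K^q) for all t ≥ 0, then there exists a constant C (depending only on an absolute constant) such that (E|X|^p)^{1/p} ≤ C·K·p^{1/q} for all p ≥ 1. -/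
/-!
The tail bound is first weakened to a polynomial one: `exp (-x) ≤ (m / x) ^ m` turns
`2 exp (-(t / K) ^ q)` into `2 (A / t) ^ (2p)` with `A = K (2p / q) ^ (1 / q)`. Integrating a
polynomial tail of order `r > p` by the layer-cake formula `E|X|^p = ∫ p t^(p-1) P(|X| ≥ t) dt`,
bounding the probability by `1` below `A` and by the tail above it, gives `E|X|^p ≤ 3 A^p`.
-/

open Real MeasureTheory Set

lemma Real.exp_neg_le_div_rpow {x m : ℝ} (hx : 0 < x) (hm : 0 < m) :
    exp (-x) ≤ (m / x) ^ m := by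
  have hlin : x / m ≤ exp (x / m) := by linarith [add_one_le_exp (x / m)]
  have hpow : (x / m) ^ m ≤ exp x := by
    calc (x / m) ^ m ≤ exp (x / m) ^ m := by gcongr
      _ = exp x := by rw [← exp_mul, div_mul_cancel₀ x hm.ne']
  rw [← inv_div, inv_rpow (by positivity), exp_neg]
  exact inv_anti₀ (by positivity) hpow

lemma Real.exp_neg_rpow_div_rpow_le {t K q r : ℝ} (ht : 0 < t) (hK : 0 < K) (hq : 0 < q)
    (hr : 0 < r) : exp (-(t ^ q) / K ^ q) ≤ (K * (r / q) ^ (1 / q) / t) ^ r := by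
  have hx : 0 < (t / K) ^ q := by positivity
  have hs : ((r / q) ^ (1 / q)) ^ q = r / q := by
    rw [← rpow_mul (by positivity), one_div_mul_cancel hq.ne', rpow_one]
  have key : ((r / q) / (t / K) ^ q) ^ (r / q) = (K * (r / q) ^ (1 / q) / t) ^ r := by
    nth_rw 1 [← hs]
    rw [← div_rpow (by positivity) (by positivity), ← rpow_mul (by positivity),
      mul_div_cancel₀ r hq.ne']
    congr 1
    field_simp
  rw [neg_div, ← div_rpow ht.le hK.le, ← key]
  exact exp_neg_le_div_rpow hx (by positivity)

section

variable {Ω : Type*} [MeasurableSpace Ω] {μ : Measure Ω} {X : Ω → ℝ} {p : ℝ}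

lemma setLIntegral_Ioc_meas_le_mul_rpow_le [IsProbabilityMeasure μ] (hp : 0 < p) {B : ℝ}
    (hB : 0 ≤ B) :
    ∫⁻ t in Ioc 0 B, μ {ω | t ≤ |X ω|} * ENNReal.ofReal (t ^ (p - 1))
      ≤ ENNReal.ofReal (B ^ p / p) := by
  calc ∫⁻ t in Ioc 0 B, μ {ω | t ≤ |X ω|} * ENNReal.ofReal (t ^ (p - 1))
      ≤ ∫⁻ t in Ioc 0 B, ENNReal.ofReal (t ^ (p - 1)) :=
        lintegral_mono fun t => (mul_le_mul_left prob_le_one _).trans_eq (one_mul _)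
    _ = ENNReal.ofReal (∫ t in Ioc 0 B, t ^ (p - 1)) := by
        rw [ofReal_integral_eq_lintegral_ofReal]
        · exact (intervalIntegral.intervalIntegrable_rpow' (by linarith)).1
        · filter_upwards [ae_restrict_mem measurableSet_Ioc] with t ht
          exact rpow_nonneg ht.1.le _
    _ = ENNReal.ofReal (B ^ p / p) := by
        rw [← intervalIntegral.integral_of_le hB, integral_rpow (Or.inl (by linarith)),
          sub_add_cancel, zero_rpow hp.ne', sub_zero]

lemma setLIntegral_Ioi_meas_le_mul_rpow_le {r a B : ℝ} (hpr : p < r) (ha : 0 ≤ a) (hB : 0 < B)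
    (htail : ∀ t, 0 < t → μ {ω | t ≤ |X ω|} ≤ ENNReal.ofReal (a * (B / t) ^ r)) :
    ∫⁻ t in Ioi B, μ {ω | t ≤ |X ω|} * ENNReal.ofReal (t ^ (p - 1))
      ≤ ENNReal.ofReal (a * B ^ p / (r - p)) := by
  have hpoint : ∀ t ∈ Ioi B, μ {ω | t ≤ |X ω|} * ENNReal.ofReal (t ^ (p - 1))
      ≤ ENNReal.ofReal (a * B ^ r * t ^ (p - r - 1)) := by
    intro t ht
    have ht0 : 0 < t := hB.trans ht
    calc μ {ω | t ≤ |X ω|} * ENNReal.ofReal (t ^ (p - 1))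
        ≤ ENNReal.ofReal (a * (B / t) ^ r) * ENNReal.ofReal (t ^ (p - 1)) := by
          gcongr; exact htail t ht0
      _ = ENNReal.ofReal (a * B ^ r * t ^ (p - r - 1)) := by
          rw [← ENNReal.ofReal_mul (by positivity), div_rpow hB.le ht0.le,
            show p - r - 1 = -r + (p - 1) by ring, rpow_add ht0, rpow_neg ht0.le]
          ring_nf
  calc ∫⁻ t in Ioi B, μ {ω | t ≤ |X ω|} * ENNReal.ofReal (t ^ (p - 1))
      ≤ ∫⁻ t in Ioi B, ENNReal.ofReal (a * B ^ r * t ^ (p - r - 1)) :=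
        setLIntegral_mono' measurableSet_Ioi hpoint
    _ = ENNReal.ofReal (∫ t in Ioi B, a * B ^ r * t ^ (p - r - 1)) := by
        rw [ofReal_integral_eq_lintegral_ofReal]
        · exact (integrableOn_Ioi_rpow_of_lt (by linarith) hB).const_mul _
        · filter_upwards [ae_restrict_mem measurableSet_Ioi] with t ht
          have : 0 < t := hB.trans ht
          positivity
    _ = ENNReal.ofReal (a * B ^ p / (r - p)) := by
        rw [integral_const_mul, integral_Ioi_rpow_of_lt (by linarith) hB,
          show p - r - 1 + 1 = p - r by ring, mul_assoc, ← mul_div_assoc, mul_neg,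
          ← rpow_add hB, add_sub_cancel, neg_div, ← div_neg, neg_sub, mul_div_assoc]

lemma integral_abs_rpow_le_of_meas_le_rpow [IsProbabilityMeasure μ] (hX : Measurable X)
    (hp : 0 < p) {r a B : ℝ} (hpr : p < r) (ha : 0 ≤ a) (hB : 0 < B)
    (htail : ∀ t, 0 < t → μ {ω | t ≤ |X ω|} ≤ ENNReal.ofReal (a * (B / t) ^ r)) :
    ∫ ω, |X ω| ^ p ∂μ ≤ (1 + a * p / (r - p)) * B ^ p := by
  have hrp : 0 < r - p := by linarith
  have hlayer : ∫⁻ ω, ENNReal.ofReal (|X ω| ^ p) ∂μ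
      ≤ ENNReal.ofReal p * ENNReal.ofReal (B ^ p / p + a * B ^ p / (r - p)) := by
    rw [lintegral_rpow_eq_lintegral_meas_le_mul μ (.of_forall fun ω => abs_nonneg (X ω))
        hX.abs.aemeasurable hp, ← Ioc_union_Ioi_eq_Ioi hB.le,
      lintegral_union measurableSet_Ioi (Ioc_disjoint_Ioi le_rfl),
      ENNReal.ofReal_add (by positivity) (by positivity)]
    gcongr
    · exact setLIntegral_Ioc_meas_le_mul_rpow_le hp hB.le
    · exact setLIntegral_Ioi_meas_le_mul_rpow_le hpr ha hB htail
  rw [← ENNReal.ofReal_mul hp.le] at hlayer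
  rw [integral_eq_lintegral_of_nonneg_ae (.of_forall fun ω => by positivity)
    (hX.abs.pow_const p).aestronglyMeasurable]
  convert ENNReal.toReal_le_of_le_ofReal (by positivity) hlayer using 1
  field_simp

end

theorem stmt_9_general {Ω : Type*} [MeasurableSpace Ω] (μ : Measure Ω) [IsProbabilityMeasure μ]
    (X : Ω → ℝ) (hX : Measurable X) (q K : ℝ) (hq1 : 0 < q) (hK : 0 < K)
    (htail : ∀ t : ℝ, 0 ≤ t →
      μ {ω | t ≤ |X ω|} ≤ ENNReal.ofReal (2 * Real.exp (-(t ^ q) / K ^ q))) :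
    ∃ C : ℝ, 0 < C ∧ ∀ p : ℝ, 1 ≤ p →
      (∫ ω, |X ω| ^ p ∂μ) ^ (1 / p) ≤ C * K * p ^ (1 / q) := by
  refine ⟨3 * (2 / q) ^ (1 / q), by positivity, fun p hp => ?_⟩
  have hp0 : 0 < p := one_pos.trans_le hp
  set A := K * (2 * p / q) ^ (1 / q) with hA
  have hpoly : ∀ t, 0 < t → μ {ω | t ≤ |X ω|} ≤ ENNReal.ofReal (2 * (A / t) ^ (2 * p)) :=
    fun t ht => (htail t ht.le).trans <| ENNReal.ofReal_le_ofReal <| by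
      gcongr; exact exp_neg_rpow_div_rpow_le ht hK hq1 (by positivity)
  have hmoment : ∫ ω, |X ω| ^ p ∂μ ≤ 3 * A ^ p := by
    convert integral_abs_rpow_le_of_meas_le_rpow hX hp0 (by linarith) zero_le_two
      (by positivity) hpoly using 2
    field_simp
    norm_num
  calc (∫ ω, |X ω| ^ p ∂μ) ^ (1 / p) ≤ (3 * A ^ p) ^ (1 / p) := by gcongr
    _ = 3 ^ (1 / p) * A := by
        rw [mul_rpow (by norm_num) (by positivity), one_div, rpow_rpow_inv (by positivity) hp0.ne']
    _ ≤ 3 * A := by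
        gcongr
        exact rpow_le_self_of_one_le (by norm_num) (by simpa using inv_le_one_of_one_le₀ hp)
    _ = 3 * (2 / q) ^ (1 / q) * K * p ^ (1 / q) := by
        rw [hA, show 2 * p / q = 2 / q * p by ring, mul_rpow (by positivity) hp0.le]
        ring

theorem stmt_9 {Ω : Type*} [MeasurableSpace Ω] (μ : Measure Ω) [IsProbabilityMeasure μ]
    (X : Ω → ℝ) (hX : Measurable X) (q K : ℝ) (hq1 : 0 < q) (hq2 : q ≤ 1) (hK : 0 < K)
    (htail : ∀ t : ℝ, 0 ≤ t →
      μ {ω | t ≤ |X ω|} ≤ ENNReal.ofReal (2 * Real.exp (-(t ^ q) / K ^ q))) :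
    ∃ C : ℝ, 0 < C ∧ ∀ p : ℝ, 1 ≤ p →
      (∫ ω, |X ω| ^ p ∂μ) ^ (1 / p) ≤ C * K * p ^ (1 / q) :=
  stmt_9_general μ X hX q K hq1 hK htail
end

section
/- Let (a_n)_{n≥0} be a nonnegative real sequence, μ > 0, c ≥ 0, and stepsizes α_n = ι/(n+κ)^ξ with ξ ∈ (0,1), ι, κ > 0, satisfying a_{n+1} ≤ (1 − α_n μ)a_n + α_n² c with α_0 μ ≤ 1. Then there is a constant C (depending on ι, μ, c, ξ, κ) such that a_n ≤ a_0·exp(−(μι/(1−ξ))·((n+κ)^{1−ξ} − κ^{1−ξ})) + C/(n+κ)^ξ for all n ≥ 0, provided κ is sufficiently large. -/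
/-!
With `x = n + κ`, `α = ι / x ^ ξ` and `E x = exp (-(μ ι / (1 - ξ)) (x ^ (1 - ξ) - κ ^ (1 - ξ)))`,
the sequence `a 0 * E x + C / x ^ ξ` is a supersolution of the recursion, hence dominates `a`.
By `1 - t ≤ exp (-t)` and concavity of `x ↦ x ^ (1 - ξ)`, one step multiplies `E` by at least
`1 - α μ`. The constant `C = 2 ι c / μ` is chosen so that half of the contraction `α μ C / x ^ ξ`
absorbs the noise `α ^ 2 c`; the other half must absorb `C` times the one-step drop of
`x ↦ x ^ (-ξ)`, at most `ξ / x ^ (ξ + 1)` by convexity, which holds once `2 ξ x ^ ξ ≤ μ ι x`,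
i.e. for `x ≥ (2 ξ / (μ ι)) ^ (1 / (1 - ξ))`.
-/

open Real

theorem rpow_add_le_mul_one_add_mul_div {x h p : ℝ} (hx : 0 < x) (hh : -x ≤ h)
    (hp0 : 0 ≤ p) (hp1 : p ≤ 1) : (x + h) ^ p ≤ x ^ p * (1 + p * h / x) := by
  have hs : -1 ≤ h / x := by rw [le_div_iff₀ hx]; linarith
  calc (x + h) ^ p = x ^ p * (1 + h / x) ^ p := by
        rw [← mul_rpow hx.le (by linarith), mul_add, mul_one, mul_div_cancel₀ _ hx.ne']
    _ ≤ x ^ p * (1 + p * h / x) := by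
        rw [mul_div_assoc]
        exact mul_le_mul_of_nonneg_left (rpow_one_add_le_one_add_mul_self hs hp0 hp1)
          (rpow_nonneg hx.le p)

theorem one_sub_mul_div_mul_rpow_add_le {x h p : ℝ} (hx : 0 < x) (hh : -x ≤ h)
    (hp0 : 0 ≤ p) (hp1 : p ≤ 1) : (1 - p * h / x) * (x + h) ^ p ≤ x ^ p := by
  rcases le_or_gt (1 - p * h / x) 0 with hneg | hpos
  · exact (mul_nonpos_of_nonpos_of_nonneg hneg (rpow_nonneg (by linarith) p)).trans
      (rpow_nonneg hx.le p)
  · calc (1 - p * h / x) * (x + h) ^ p ≤ (1 - p * h / x) * (x ^ p * (1 + p * h / x)) :=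
          mul_le_mul_of_nonneg_left (rpow_add_le_mul_one_add_mul_div hx hh hp0 hp1) hpos.le
      _ = x ^ p * (1 - (p * h / x) ^ 2) := by ring
      _ ≤ x ^ p := mul_le_of_le_one_right (rpow_nonneg hx.le p) (by nlinarith)

theorem mul_rpow_le_self {A ξ x : ℝ} (hA : 0 ≤ A) (hξ : ξ < 1)
    (hx : A ^ (1 - ξ)⁻¹ ≤ x) : A * x ^ ξ ≤ x := by
  have hx0 : 0 ≤ x := (rpow_nonneg hA _).trans hx
  have hAx : A ≤ x ^ (1 - ξ) := by
    calc A = (A ^ (1 - ξ)⁻¹) ^ (1 - ξ) := by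
          rw [← rpow_mul hA, inv_mul_cancel₀ (by linarith), rpow_one]
      _ ≤ x ^ (1 - ξ) := rpow_le_rpow (rpow_nonneg hA _) hx (by linarith)
  calc A * x ^ ξ ≤ x ^ (1 - ξ) * x ^ ξ :=
        mul_le_mul_of_nonneg_right hAx (rpow_nonneg hx0 ξ)
    _ = x := by rw [← rpow_add' hx0 (by norm_num), sub_add_cancel, rpow_one]

theorem le_of_le_mul_add_of_mul_add_le {a b r e : ℕ → ℝ} (hr : ∀ n, 0 ≤ r n)
    (ha : ∀ n, a (n + 1) ≤ r n * a n + e n) (hb : ∀ n, r n * b n + e n ≤ b (n + 1))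
    (h0 : a 0 ≤ b 0) : ∀ n, a n ≤ b n
  | 0 => h0
  | n + 1 => (ha n).trans <|
      (add_le_add_left
        (mul_le_mul_of_nonneg_left (le_of_le_mul_add_of_mul_add_le hr ha hb h0 n) (hr n)) _).trans
        (hb n)

theorem exp_decay_step {x ξ ι μ κ : ℝ} (hx : 0 < x) (hξ0 : 0 ≤ ξ) (hξ1 : ξ < 1)
    (hμι : 0 ≤ μ * ι) :
    (1 - ι / x ^ ξ * μ) * exp (-(μ * ι / (1 - ξ)) * (x ^ (1 - ξ) - κ ^ (1 - ξ)))
      ≤ exp (-(μ * ι / (1 - ξ)) * ((x + 1) ^ (1 - ξ) - κ ^ (1 - ξ))) := by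
  have h1ξ : 0 < 1 - ξ := by linarith
  have hgrowth : μ * ι / (1 - ξ) * ((x + 1) ^ (1 - ξ) - x ^ (1 - ξ)) ≤ ι / x ^ ξ * μ :=
    calc μ * ι / (1 - ξ) * ((x + 1) ^ (1 - ξ) - x ^ (1 - ξ))
        ≤ μ * ι / (1 - ξ) * (x ^ (1 - ξ) * ((1 - ξ) * 1 / x)) := by
          have := rpow_add_le_mul_one_add_mul_div hx (h := 1) (by linarith) h1ξ.le
            (by linarith : 1 - ξ ≤ 1)
          exact mul_le_mul_of_nonneg_left (by linarith) (by positivity)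
      _ = ι / x ^ ξ * μ := by
          rw [rpow_sub hx, rpow_one]
          field_simp
  calc _ ≤ exp (-(ι / x ^ ξ * μ))
          * exp (-(μ * ι / (1 - ξ)) * (x ^ (1 - ξ) - κ ^ (1 - ξ))) :=
        mul_le_mul_of_nonneg_right (by linarith [add_one_le_exp (-(ι / x ^ ξ * μ))])
          (exp_pos _).le
    _ = exp (-(ι / x ^ ξ * μ) - μ * ι / (1 - ξ) * (x ^ (1 - ξ) - κ ^ (1 - ξ))) := by
        rw [← exp_add]; ring_nf
    _ ≤ _ := exp_le_exp.mpr (by linarith)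

theorem inv_rpow_error_step {x ξ ι μ c : ℝ} (hx : 0 < x) (hξ0 : 0 ≤ ξ) (hξ1 : ξ ≤ 1)
    (hμ : 0 < μ) (hι : 0 ≤ ι) (hc : 0 ≤ c) (hx_large : 2 * ξ * x ^ ξ ≤ μ * ι * x) :
    (1 - ι / x ^ ξ * μ) * (2 * ι * c / μ / x ^ ξ) + (ι / x ^ ξ) ^ 2 * c
      ≤ 2 * ι * c / μ / (x + 1) ^ ξ := by
  set y := x ^ ξ
  have hy : 0 < y := rpow_pos_of_pos hx ξ
  have hz : 0 < (x + 1) ^ ξ := rpow_pos_of_pos (by linarith) ξ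
  have hzy : (1 - ξ / x) * (x + 1) ^ ξ ≤ y := by
    simpa using one_sub_mul_div_mul_rpow_add_le hx (h := 1) (by linarith) hξ0 hξ1
  have hslack : 2 * ι * c / μ * ξ / (x * y) ≤ ι ^ 2 * c / y ^ 2 := by
    have hw : 0 ≤ ι * c / (μ * x * y ^ 2) := by positivity
    calc 2 * ι * c / μ * ξ / (x * y) = ι * c / (μ * x * y ^ 2) * (2 * ξ * y) := by
          field_simp
      _ ≤ ι * c / (μ * x * y ^ 2) * (μ * ι * x) := mul_le_mul_of_nonneg_left hx_large hw
      _ = ι ^ 2 * c / y ^ 2 := by field_simp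
  calc (1 - ι / y * μ) * (2 * ι * c / μ / y) + (ι / y) ^ 2 * c
        = 2 * ι * c / μ / y - ι ^ 2 * c / y ^ 2 := by
        field_simp
        ring
    _ ≤ 2 * ι * c / μ / y - 2 * ι * c / μ * ξ / (x * y) := by linarith
    _ = 2 * ι * c / μ * (1 - ξ / x) / y := by field_simp
    _ ≤ 2 * ι * c / μ / (x + 1) ^ ξ := by
        rw [div_le_div_iff₀ hy hz, mul_assoc]
        exact mul_le_mul_of_nonneg_left hzy (by positivity)

theorem stmt_11 (ξ ι μ c : ℝ) (hξ : ξ ∈ Set.Ioo (0 : ℝ) 1) (hι : 0 < ι) (hμ : 0 < μ)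
    (hc : 0 ≤ c) :
    ∃ κ₀ : ℝ, 0 < κ₀ ∧ ∀ κ : ℝ, κ₀ ≤ κ → ∃ C : ℝ,
      ∀ a : ℕ → ℝ, (∀ n, 0 ≤ a n) → (ι / κ ^ ξ) * μ ≤ 1 →
        (∀ n : ℕ, a (n + 1) ≤ (1 - (ι / ((n : ℝ) + κ) ^ ξ) * μ) * a n
          + (ι / ((n : ℝ) + κ) ^ ξ) ^ 2 * c) →
        ∀ n : ℕ, a n ≤
          a 0 * Real.exp (-(μ * ι / (1 - ξ)) * (((n : ℝ) + κ) ^ (1 - ξ) - κ ^ (1 - ξ)))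
            + C / ((n : ℝ) + κ) ^ ξ := by
  obtain ⟨hξ0, hξ1⟩ := hξ
  refine ⟨(2 * ξ / (μ * ι)) ^ (1 - ξ)⁻¹, by positivity,
    fun κ hκ => ⟨2 * ι * c / μ, fun a ha hα₀ hrec => ?_⟩⟩
  have hκ0 : 0 < κ := lt_of_lt_of_le (by positivity) hκ
  have hlarge (x : ℝ) (hx : κ ≤ x) : 2 * ξ * x ^ ξ ≤ μ * ι * x :=
    calc 2 * ξ * x ^ ξ = μ * ι * (2 * ξ / (μ * ι) * x ^ ξ) := by field_simp
      _ ≤ μ * ι * x := mul_le_mul_of_nonneg_left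
          (mul_rpow_le_self (by positivity) hξ1 (hκ.trans hx)) (by positivity)
  refine le_of_le_mul_add_of_mul_add_le (fun n => ?_) hrec (fun n => ?_) (by simp; positivity)
  · have hα : ι / ((n : ℝ) + κ) ^ ξ ≤ ι / κ ^ ξ := by gcongr; simp
    nlinarith
  · have hx : 0 < (n : ℝ) + κ := by positivity
    have hA := mul_le_mul_of_nonneg_left
      (exp_decay_step (κ := κ) (μ := μ) hx hξ0.le hξ1 (by positivity)) (ha 0)
    have hB := inv_rpow_error_step hx hξ0.le hξ1.le hμ hι.le hc (hlarge _ (by simp))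
    rw [Nat.cast_succ, add_right_comm]
    linear_combination hA + hB
end

section
/- Let (a_n)_{n≥0} be a nonnegative real sequence, μ > 0, c ≥ 0, and stepsizes α_n = ι/(n+κ) with ιμ > 1 and κ large enough that α_0 μ ≤ 1, satisfying a_{n+1} ≤ (1 − α_n μ)a_n + α_n² c. Then a_n ≤ a_0·(κ/(n+κ))^{ιμ} + (4e·ι²c/(ιμ − 1))·1/(n+κ) for all n ≥ 0. -/
/-!
Write `β = ιμ` and `t = n + κ`. By induction, `a n ≤ a 0 (κ/t)^β + C/t` with
`C = 4e ι² c/(β - 1)`. For the first term, Bernoulli's inequality gives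
`1 - β/t ≤ 1 - β/(t+1) ≤ (t/(t+1))^β`, so one contraction step carries `(κ/t)^β` to
`(κ/(t+1))^β`. For the second, `(1 - β/t) C/t + ι²c/t² ≤ C (t - 1)/t² ≤ C/(t+1)`
as soon as `ι²c ≤ C (β - 1)`, which is where `β > 1` is needed; the factor `4e` only
has to be at least `1`.
-/

open Real

lemma one_sub_div_mul_rpow_le {β t κ : ℝ} (hβ : 1 ≤ β) (ht : 0 < t) (hκ : 0 ≤ κ) :
    (1 - β / t) * (κ / t) ^ β ≤ (κ / (t + 1)) ^ β := by
  have ht1 : 0 < t + 1 := by linarith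
  have bernoulli : 1 - β / (t + 1) ≤ (t / (t + 1)) ^ β := by
    have hs : -1 ≤ -(1 / (t + 1)) := by
      rw [neg_le_neg_iff, div_le_one ht1]; linarith
    have h := one_add_mul_self_le_rpow_one_add hs hβ
    have e : 1 + -(1 / (t + 1)) = t / (t + 1) := by field_simp; ring
    rw [e] at h
    linarith [show β * -(1 / (t + 1)) = -(β / (t + 1)) by ring]
  have hstep : β / (t + 1) ≤ β / t :=
    div_le_div_of_nonneg_left (by linarith) ht (by linarith)
  calc (1 - β / t) * (κ / t) ^ β ≤ (t / (t + 1)) ^ β * (κ / t) ^ β := by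
        gcongr; linarith
    _ = (κ / (t + 1)) ^ β := by
        rw [← mul_rpow (by positivity) (by positivity)]
        congr 1
        field_simp

lemma one_sub_div_mul_div_add_div_sq_le {β t C D : ℝ} (hC : 0 ≤ C) (ht : 0 < t)
    (hD : D ≤ C * (β - 1)) :
    (1 - β / t) * (C / t) + D / t ^ 2 ≤ C / (t + 1) := by
  have h : (1 - β / t) * (C / t) + D / t ^ 2 = ((t - β) * C + D) / t ^ 2 := by
    field_simp
  rw [h, div_le_div_iff₀ (by positivity) (by linarith)]
  nlinarith [mul_le_mul_of_nonneg_left hD (by linarith : (0 : ℝ) ≤ t + 1)]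

theorem le_mul_rpow_add_div_of_le_one_sub_div {a : ℕ → ℝ} {β κ C D : ℝ} (hβ : 1 ≤ β)
    (hβκ : β ≤ κ) (hC : 0 ≤ C) (hD : D ≤ C * (β - 1)) (ha0 : 0 ≤ a 0)
    (hrec : ∀ n : ℕ, a (n + 1) ≤ (1 - β / (n + κ)) * a n + D / (n + κ) ^ 2) (n : ℕ) :
    a n ≤ a 0 * (κ / (n + κ)) ^ β + C / (n + κ) := by
  have hκ : 0 < κ := by linarith
  induction n with
  | zero =>
    simp only [Nat.cast_zero, zero_add, div_self hκ.ne', one_rpow, mul_one]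
    linarith [div_nonneg hC hκ.le]
  | succ n ih =>
    set t : ℝ := n + κ
    have ht : 0 < t := by positivity
    have hcontract : 0 ≤ 1 - β / t := by
      rw [sub_nonneg, div_le_one ht]
      linarith [(Nat.cast_nonneg n : (0 : ℝ) ≤ n)]
    push_cast
    rw [add_right_comm]
    calc a (n + 1) ≤ (1 - β / t) * (a 0 * (κ / t) ^ β + C / t) + D / t ^ 2 := by
          linarith [hrec n, mul_le_mul_of_nonneg_left ih hcontract]
      _ = a 0 * ((1 - β / t) * (κ / t) ^ β) + ((1 - β / t) * (C / t) + D / t ^ 2) := by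
          ring
      _ ≤ a 0 * (κ / (t + 1)) ^ β + C / (t + 1) := by
          gcongr
          · exact one_sub_div_mul_rpow_le hβ ht hκ.le
          · exact one_sub_div_mul_div_add_div_sq_le hC ht hD

theorem stmt_12_general (ι κ μ c : ℝ) (hιμ : 1 < ι * μ) (hκ : 0 < κ) (hc : 0 ≤ c)
    (h0 : (ι / κ) * μ ≤ 1)
    (a : ℕ → ℝ) (ha : ∀ n, 0 ≤ a n)
    (hrec : ∀ n : ℕ, a (n + 1) ≤ (1 - (ι / ((n : ℝ) + κ)) * μ) * a n
      + (ι / ((n : ℝ) + κ)) ^ 2 * c) :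
    ∀ n : ℕ, a n ≤ a 0 * (κ / ((n : ℝ) + κ)) ^ (ι * μ)
      + (4 * Real.exp 1 * ι ^ 2 * c / (ι * μ - 1)) * (1 / ((n : ℝ) + κ)) := by
  intro n
  have hβ : 0 < ι * μ - 1 := by linarith
  have hβκ : ι * μ ≤ κ := by rwa [div_mul_eq_mul_div, div_le_one hκ] at h0
  have he : 1 ≤ 4 * Real.exp 1 := by linarith [add_one_le_exp (1 : ℝ)]
  have hD : ι ^ 2 * c ≤ 4 * Real.exp 1 * ι ^ 2 * c / (ι * μ - 1) * (ι * μ - 1) := by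
    rw [div_mul_cancel₀ _ hβ.ne', mul_assoc]
    exact le_mul_of_one_le_left (by positivity) he
  have hrec' : ∀ n : ℕ, a (n + 1) ≤ (1 - ι * μ / (n + κ)) * a n + ι ^ 2 * c / (n + κ) ^ 2 :=
    fun n ↦ by simpa only [div_mul_eq_mul_div, div_pow] using hrec n
  rw [mul_one_div]
  exact le_mul_rpow_add_div_of_le_one_sub_div hιμ.le hβκ (by positivity) hD (ha 0) hrec' n

theorem stmt_12 (ι κ μ c : ℝ) (hμ : 0 < μ) (hιμ : 1 < ι * μ) (hκ : 0 < κ) (hc : 0 ≤ c)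
    (h0 : (ι / κ) * μ ≤ 1)
    (a : ℕ → ℝ) (ha : ∀ n, 0 ≤ a n)
    (hrec : ∀ n : ℕ, a (n + 1) ≤ (1 - (ι / ((n : ℝ) + κ)) * μ) * a n
      + (ι / ((n : ℝ) + κ)) ^ 2 * c) :
    ∀ n : ℕ, a n ≤ a 0 * (κ / ((n : ℝ) + κ)) ^ (ι * μ)
      + (4 * Real.exp 1 * ι ^ 2 * c / (ι * μ - 1)) * (1 / ((n : ℝ) + κ)) :=
  stmt_12_general ι κ μ c hιμ hκ hc h0 a ha hrec
end

section
/- Let u be a real random variable with E[u²] > 0, independent of a real random variable ζ, and let l : ℝ → ℝ be differentiable with l′ nondecreasing, l′(0) = 0, E[l′(ζ)] well-defined, and suppose there exist Δ_l > Δ_ζ > 0, μ_l > 0 with P(|ζ| ≤ Δ_ζ) > 0 and l′(t) − l′(t′) ≥ μ_l(t − t′) whenever −Δ_l ≤ t′ ≤ t ≤ Δ_l. If E[u] = 0, then E[l′(u + ζ)·u] > 0. -/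
/-!
Write `E[l'(u + ζ) u] = E[(l'(u + ζ) - l'(ζ)) u] + E[l'(ζ)] E[u]`, using independence for the
second term, which vanishes since `E[u] = 0`. Monotonicity of `l'` makes the integrand of the
first term nonnegative, and on the event `{u ≠ 0, |ζ| ≤ Δζ}`, which has positive probability by
independence and `E[u²] > 0`, local strong monotonicity makes it strictly positive.
-/

open MeasureTheory ProbabilityTheory

theorem Monotone.sub_mul_nonneg {f : ℝ → ℝ} (hf : Monotone f) (x z : ℝ) :
    0 ≤ (f (x + z) - f z) * x := by
  rcases le_total 0 x with hx | hx
  · exact mul_nonneg (sub_nonneg.2 (hf (by linarith))) hx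
  · exact mul_nonneg_of_nonpos_of_nonpos (sub_nonpos.2 (hf (by linarith))) hx

theorem Monotone.sub_mul_pos_of_strongMonoOn {f : ℝ → ℝ} (hf : Monotone f) {Δ δ m : ℝ}
    (hδΔ : δ < Δ) (hm : 0 < m)
    (hstrong : ∀ s t, -Δ ≤ s → s ≤ t → t ≤ Δ → m * (t - s) ≤ f t - f s)
    {x z : ℝ} (hx : x ≠ 0) (hz : |z| ≤ δ) :
    0 < (f (x + z) - f z) * x := by
  obtain ⟨hzl, hzu⟩ := abs_le.1 hz
  rcases hx.lt_or_gt with hneg | hpos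
  · set d := min (-x) (Δ - δ)
    have hd : 0 < d := lt_min (by linarith) (by linarith)
    have hdx : d ≤ -x := min_le_left _ _
    have hdΔ : d ≤ Δ - δ := min_le_right _ _
    have hmono : f (x + z) ≤ f (z - d) := hf (by linarith)
    have hgap : m * d ≤ f z - f (z - d) := by
      simpa using hstrong (z - d) z (by linarith) (by linarith) (by linarith)
    have hdiff : f (x + z) - f z ≤ -(m * d) := by linarith
    nlinarith [mul_pos hm hd]
  · set d := min x (Δ - δ)
    have hd : 0 < d := lt_min hpos (by linarith)
    have hdx : d ≤ x := min_le_left _ _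
    have hdΔ : d ≤ Δ - δ := min_le_right _ _
    have hmono : f (z + d) ≤ f (x + z) := hf (by linarith)
    have hgap : m * d ≤ f (z + d) - f z := by
      simpa using hstrong z (z + d) (by linarith) (by linarith) (by linarith)
    have hdiff : m * d ≤ f (x + z) - f z := by linarith
    nlinarith [mul_pos hm hd]

namespace ProbabilityTheory

variable {Ω : Type*} [MeasurableSpace Ω] {μ : Measure Ω} {u ζ : Ω → ℝ}

theorem IndepFun.integral_comp_mul_eq_zero (h : IndepFun u ζ μ) {g : ℝ → ℝ}
    (hg : Measurable g) (hgζ : Integrable (fun ω => g (ζ ω)) μ) (hu : Integrable u μ)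
    (hu0 : ∫ ω, u ω ∂μ = 0) :
    ∫ ω, g (ζ ω) * u ω ∂μ = 0 := by
  have hind : IndepFun (fun ω => g (ζ ω)) u μ := h.symm.comp hg measurable_id
  rw [hind.integral_fun_mul_eq_mul_integral hgζ.1 hu.1, hu0, mul_zero]

theorem IndepFun.measure_inter_preimage_ne_zero (h : IndepFun u ζ μ) {A B : Set ℝ}
    (hA : MeasurableSet A) (hB : MeasurableSet B) (huA : μ (u ⁻¹' A) ≠ 0)
    (hζB : μ (ζ ⁻¹' B) ≠ 0) :
    μ (u ⁻¹' A ∩ ζ ⁻¹' B) ≠ 0 := by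
  rw [h.measure_inter_preimage_eq_mul _ _ hA hB]
  exact mul_ne_zero huA hζB

end ProbabilityTheory

theorem MeasureTheory.measure_ne_zero_of_integral_sq_pos {Ω : Type*} [MeasurableSpace Ω]
    {μ : Measure Ω} {u : Ω → ℝ} (hu : 0 < ∫ ω, u ω ^ 2 ∂μ) :
    μ {ω | u ω ≠ 0} ≠ 0 := by
  intro h
  have hae : (fun ω => u ω ^ 2) =ᵐ[μ] 0 := by
    filter_upwards [ae_iff.2 (by simpa using h)] with ω hω
    simp [hω]
  simp [integral_congr_ae hae] at hu

theorem stmt_14_general {Ω : Type*} [MeasurableSpace Ω] (μ : Measure Ω)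
    (u ζ : Ω → ℝ)
    (hindep : ProbabilityTheory.IndepFun u ζ μ)
    (l' : ℝ → ℝ)
    (hmono : Monotone l')
    (Δl Δζ μl : ℝ) (h2 : Δζ < Δl) (hμl : 0 < μl)
    (hζpos : 0 < μ {ω | |ζ ω| ≤ Δζ})
    (hsm : ∀ t' t : ℝ, -Δl ≤ t' → t' ≤ t → t ≤ Δl → μl * (t - t') ≤ l' t - l' t')
    (hu2 : 0 < ∫ ω, (u ω) ^ 2 ∂μ)
    (huint : Integrable u μ) (humean : ∫ ω, u ω ∂μ = 0)
    (hζint : Integrable (fun ω => l' (ζ ω)) μ)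
    (hprodint : Integrable (fun ω => l' (u ω + ζ ω) * u ω) μ) :
    0 < ∫ ω, l' (u ω + ζ ω) * u ω ∂μ := by
  set g : Ω → ℝ := fun ω => (l' (u ω + ζ ω) - l' (ζ ω)) * u ω
  have hsplit : g = fun ω => l' (u ω + ζ ω) * u ω - l' (ζ ω) * u ω := by
    funext ω; ring
  have hζu : Integrable (fun ω => l' (ζ ω) * u ω) μ :=
    (hindep.symm.comp hmono.measurable measurable_id).integrable_mul hζint huint
  have hgint : Integrable g μ := by
    rw [hsplit]
    exact hprodint.sub hζu
  have hg : ∫ ω, g ω ∂μ = ∫ ω, l' (u ω + ζ ω) * u ω ∂μ := by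
    rw [hsplit, integral_sub hprodint hζu,
      hindep.integral_comp_mul_eq_zero hmono.measurable hζint huint humean, sub_zero]
  have hsupport : u ⁻¹' {x | x ≠ 0} ∩ ζ ⁻¹' {x | |x| ≤ Δζ} ⊆ Function.support g :=
    fun ω ⟨hu, hζ⟩ => (hmono.sub_mul_pos_of_strongMonoOn h2 hμl hsm hu hζ).ne'
  rw [← hg, integral_pos_iff_support_of_nonneg (fun ω => hmono.sub_mul_nonneg _ _) hgint]
  exact pos_iff_ne_zero.2 fun hnull => hindep.measure_inter_preimage_ne_zero
    (measurableSet_singleton 0).compl (measurableSet_le measurable_abs measurable_const)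
    (measure_ne_zero_of_integral_sq_pos hu2) hζpos.ne' (measure_mono_null hsupport hnull)

theorem stmt_14 {Ω : Type*} [MeasurableSpace Ω] (μ : Measure Ω) [IsProbabilityMeasure μ]
    (u ζ : Ω → ℝ) (hmu : Measurable u) (hmζ : Measurable ζ)
    (hindep : ProbabilityTheory.IndepFun u ζ μ)
    (l l' : ℝ → ℝ) (hderiv : ∀ t, HasDerivAt l (l' t) t)
    (hmono : Monotone l') (h0 : l' 0 = 0)
    (Δl Δζ μl : ℝ) (h1 : 0 < Δζ) (h2 : Δζ < Δl) (hμl : 0 < μl)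
    (hζpos : 0 < μ {ω | |ζ ω| ≤ Δζ})
    (hsm : ∀ t' t : ℝ, -Δl ≤ t' → t' ≤ t → t ≤ Δl → μl * (t - t') ≤ l' t - l' t')
    (hu2 : 0 < ∫ ω, (u ω) ^ 2 ∂μ)
    (huint : Integrable u μ) (humean : ∫ ω, u ω ∂μ = 0)
    (hζint : Integrable (fun ω => l' (ζ ω)) μ)
    (hprodint : Integrable (fun ω => l' (u ω + ζ ω) * u ω) μ) :
    0 < ∫ ω, l' (u ω + ζ ω) * u ω ∂μ :=
  stmt_14_general μ u ζ hindep l' hmono Δl Δζ μl h2 hμl hζpos hsm hu2 huint humean hζint hprodint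
end

section
/- Let θ, θ′ ∈ ℝ, θ′ < θ < θ′ + α/4 for some α > 0, let X be a real random variable with CDF F, and suppose F(θ) − F(θ′) ≥ μ(θ − θ′) for some μ > 0. Consider the coupled one-step recursive quantile updates T(ϑ) = ϑ − α(1{X ≤ ϑ} − τ). Then the Wasserstein-1 distance between the laws of T(θ) and T(θ′) satisfies W₁(L(T(θ)), L(T(θ′))) ≥ (1 + αμ/4)·(θ − θ′). -/
/-!
On the event `X ≤ ϑ` the update moves `ϑ` down by `α (1 - τ)`, otherwise up by `α τ`, so the law
of `T ϑ` is a two-point law whose CDF jumps to `F ϑ` at `ϑ - α (1 - τ)` and to `1` at `ϑ + α τ`.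
For `θ' < θ < θ' + α` the four jump points of the two CDFs interlace, and the absolute difference
of the CDFs is `F θ'`, `F θ - F θ'`, `1 - F θ` on three consecutive intervals of lengths
`θ - θ'`, `α - (θ - θ')`, `θ - θ'`. Hence
`W₁ = (θ - θ') + (α - 2 (θ - θ')) (F θ - F θ')`, and for `θ - θ' < α / 4` the second term is at
least `(α / 4) μc (θ - θ')`.
-/

open MeasureTheory

/-- The CDF of the law `p δ_lo + (1 - p) δ_hi` (for `lo ≤ hi`). -/
noncomputable def twoPointCDF (lo hi p t : ℝ) : ℝ :=
  if hi ≤ t then 1 else if lo ≤ t then p else 0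

lemma quantileStep_le_iff {α : ℝ} (hα : 0 ≤ α) (τ ϑ x t : ℝ) :
    ϑ - α * ((if x ≤ ϑ then (1 : ℝ) else 0) - τ) ≤ t ↔
      ϑ + α * τ ≤ t ∨ ϑ - α * (1 - τ) ≤ t ∧ x ≤ ϑ := by
  by_cases hx : x ≤ ϑ
  · simp only [hx, if_true, and_true]
    exact ⟨Or.inr, by rintro (h | h) <;> nlinarith⟩
  · simp only [hx, if_false, and_false, or_false]
    constructor <;> intro h <;> linarith

lemma toReal_measure_quantileStep_le {Ω : Type*} [MeasurableSpace Ω] (μ : Measure Ω)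
    [IsProbabilityMeasure μ] (X : Ω → ℝ) {α : ℝ} (hα : 0 ≤ α) (τ ϑ t : ℝ) :
    (μ {ω | ϑ - α * ((if X ω ≤ ϑ then (1 : ℝ) else 0) - τ) ≤ t}).toReal =
      twoPointCDF (ϑ - α * (1 - τ)) (ϑ + α * τ) (μ {ω | X ω ≤ ϑ}).toReal t := by
  simp_rw [quantileStep_le_iff hα, twoPointCDF]
  split_ifs <;> simp [*]

lemma toReal_measure_le_mono {Ω : Type*} [MeasurableSpace Ω] (μ : Measure Ω) [IsFiniteMeasure μ]
    (X : Ω → ℝ) {a b : ℝ} (hab : a ≤ b) :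
    (μ {ω | X ω ≤ a}).toReal ≤ (μ {ω | X ω ≤ b}).toReal :=
  measureReal_mono fun _ h ↦ le_trans h hab

section Interlacing

variable {c₁ c₂ c₃ c₄ p q : ℝ}

lemma abs_sub_twoPointCDF (h₁₂ : c₁ ≤ c₂) (h₂₃ : c₂ ≤ c₃) (h₃₄ : c₃ ≤ c₄)
    (hq : 0 ≤ q) (hqp : q ≤ p) (hp : p ≤ 1) (t : ℝ) :
    |twoPointCDF c₂ c₄ p t - twoPointCDF c₁ c₃ q t| =
      (Set.Ico c₁ c₂).indicator (fun _ ↦ q) t + (Set.Ico c₂ c₃).indicator (fun _ ↦ p - q) t +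
        (Set.Ico c₃ c₄).indicator (fun _ ↦ 1 - p) t := by
  simp only [twoPointCDF, Set.indicator, Set.mem_Ico]
  split_ifs <;> grind

lemma integral_abs_sub_twoPointCDF (h₁₂ : c₁ ≤ c₂) (h₂₃ : c₂ ≤ c₃) (h₃₄ : c₃ ≤ c₄)
    (hq : 0 ≤ q) (hqp : q ≤ p) (hp : p ≤ 1) :
    ∫ t, |twoPointCDF c₂ c₄ p t - twoPointCDF c₁ c₃ q t| =
      q * (c₂ - c₁) + (p - q) * (c₃ - c₂) + (1 - p) * (c₄ - c₃) := by
  have hint (a b c : ℝ) : Integrable ((Set.Ico a b).indicator fun _ ↦ c) :=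
    (integrable_indicator_iff measurableSet_Ico).2 (integrableOn_const (by simp))
  simp_rw [abs_sub_twoPointCDF h₁₂ h₂₃ h₃₄ hq hqp hp]
  rw [integral_add (f := fun t ↦ _ + _) ((hint _ _ _).add (hint _ _ _)) (hint _ _ _),
    integral_add (hint _ _ _) (hint _ _ _)]
  simp only [integral_indicator_const _ measurableSet_Ico, Real.volume_real_Ico_of_le h₁₂,
    Real.volume_real_Ico_of_le h₂₃, Real.volume_real_Ico_of_le h₃₄, smul_eq_mul]
  ring

end Interlacing

lemma integral_abs_sub_cdf_quantileStep {Ω : Type*} [MeasurableSpace Ω] (μ : Measure Ω)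
    [IsProbabilityMeasure μ] (X : Ω → ℝ) {α τ θ θ' : ℝ} (hα : 0 ≤ α) (h₁ : θ' ≤ θ)
    (h₂ : θ ≤ θ' + α) :
    ∫ t : ℝ,
        |(μ {ω | θ - α * ((if X ω ≤ θ then (1 : ℝ) else 0) - τ) ≤ t}).toReal -
          (μ {ω | θ' - α * ((if X ω ≤ θ' then (1 : ℝ) else 0) - τ) ≤ t}).toReal| =
      (θ - θ') + (α - 2 * (θ - θ')) *
        ((μ {ω | X ω ≤ θ}).toReal - (μ {ω | X ω ≤ θ'}).toReal) := by
  simp_rw [toReal_measure_quantileStep_le μ X hα]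
  rw [integral_abs_sub_twoPointCDF (by linarith) (by linarith) (by linarith) ENNReal.toReal_nonneg
    (toReal_measure_le_mono μ X h₁) measureReal_le_one]
  ring

theorem stmt_18_general {Ω : Type*} [MeasurableSpace Ω] (μ : Measure Ω) [IsProbabilityMeasure μ]
    (X : Ω → ℝ) (α τ μc θ θ' : ℝ)
    (hα : 0 < α)
    (h1 : θ' < θ) (h2 : θ < θ' + α / 4)
    (hF : μc * (θ - θ') ≤ (μ {ω | X ω ≤ θ}).toReal - (μ {ω | X ω ≤ θ'}).toReal) :
    (1 + α * μc / 4) * (θ - θ') ≤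
      ∫ t : ℝ,
        |(μ {ω | θ - α * ((if X ω ≤ θ then (1 : ℝ) else 0) - τ) ≤ t}).toReal -
          (μ {ω | θ' - α * ((if X ω ≤ θ' then (1 : ℝ) else 0) - τ) ≤ t}).toReal| := by
  rw [integral_abs_sub_cdf_quantileStep μ X hα.le h1.le (by linarith)]
  have hmono : 0 ≤ (μ {ω | X ω ≤ θ}).toReal - (μ {ω | X ω ≤ θ'}).toReal :=
    sub_nonneg.2 (toReal_measure_le_mono μ X h1.le)
  linarith [mul_le_mul_of_nonneg_right (by linarith : α / 4 ≤ α - 2 * (θ - θ')) hmono,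
    mul_le_mul_of_nonneg_left hF (by linarith : 0 ≤ α / 4)]

theorem stmt_18 {Ω : Type*} [MeasurableSpace Ω] (μ : Measure Ω) [IsProbabilityMeasure μ]
    (X : Ω → ℝ) (hX : Measurable X) (α τ μc θ θ' : ℝ)
    (hα : 0 < α) (hμc : 0 < μc)
    (h1 : θ' < θ) (h2 : θ < θ' + α / 4)
    (hF : μc * (θ - θ') ≤ (μ {ω | X ω ≤ θ}).toReal - (μ {ω | X ω ≤ θ'}).toReal) :
    (1 + α * μc / 4) * (θ - θ') ≤
      ∫ t : ℝ,
        |(μ {ω | θ - α * ((if X ω ≤ θ then (1 : ℝ) else 0) - τ) ≤ t}).toReal -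
          (μ {ω | θ' - α * ((if X ω ≤ θ' then (1 : ℝ) else 0) - τ) ≤ t}).toReal| :=
  stmt_18_general μ X α τ μc θ θ' hα h1 h2 hF
end
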